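/- arXiv:2201.06911 — 3 statements merged into one kernel-verified Lean document; each statement's English description precedes it below -/
import Mathlib

section
/- Let G be a generalized dicyclic group generated by A and t, let S be an inverse-closed subset of G∖{1} with ⟨S⟩ = G, let s ∈ S ∩ A be such that H = ⟨S∖{s,s⁻¹}⟩ ≠ G. If the Cayley graph Cay(G,S) is distance-regular, then [G:H] = 2 and the order of s is at least 4. -/
open SimpleGraph Pointwise

/-- The Cayley graph of a group `G` with respect to a connection set `S`.
For an inverse-closed `S ⊆ G \ {1}` this agrees with the usual definition:
`g` and `h` are adjacent iff `g = h * s` for some `s ∈ S`. -/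
def cayleyGraph (G : Type*) [Group G] (S : Set G) : SimpleGraph G where
  Adj g h := g ≠ h ∧ (h⁻¹ * g ∈ S ∨ g⁻¹ * h ∈ S)
  symm := ⟨fun g h hgh => ⟨hgh.1.symm, hgh.2.symm⟩⟩
  loopless := ⟨fun g hg => hg.1 rfl⟩

section Helpers
variable {G : Type*} [Group G] {S : Set G}

lemma cayley_adj (hS1 : (1:G) ∉ S) (hSinv : ∀ x ∈ S, x⁻¹ ∈ S) {u w : G} :
    (cayleyGraph G S).Adj u w ↔ u⁻¹ * w ∈ S := by
  constructor
  · rintro ⟨hne, h | h⟩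
    · have := hSinv _ h; rwa [mul_inv_rev, inv_inv] at this
    · exact h
  · intro h
    exact ⟨fun he => hS1 (by rw [he, inv_mul_cancel] at h; exact h), Or.inr h⟩

lemma cayley_mem_nb (hS1 : (1:G) ∉ S) (hSinv : ∀ x ∈ S, x⁻¹ ∈ S) {v w : G} :
    w ∈ (cayleyGraph G S).neighborSet v ↔ v⁻¹ * w ∈ S := by
  rw [SimpleGraph.mem_neighborSet, cayley_adj hS1 hSinv]

lemma cayley_dist_one (hS1 : (1:G) ∉ S) (hSinv : ∀ x ∈ S, x⁻¹ ∈ S) {x : G} (hx : x ∈ S) :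
    (cayleyGraph G S).dist 1 x = 1 := by
  rw [SimpleGraph.dist_eq_one_iff_adj, cayley_adj hS1 hSinv]
  simpa using hx

lemma cayley_dist_two (hS1 : (1:G) ∉ S) (hSinv : ∀ x ∈ S, x⁻¹ ∈ S) {x y : G}
    (hx1 : x ≠ 1) (hxS : x ∉ S) (hy : y ∈ S) (hyx : y⁻¹ * x ∈ S) :
    (cayleyGraph G S).dist 1 x = 2 := by
  have ha1 : (cayleyGraph G S).Adj 1 y := by
    rw [cayley_adj hS1 hSinv]; simpa using hy
  have ha2 : (cayleyGraph G S).Adj y x := by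
    rw [cayley_adj hS1 hSinv]; exact hyx
  have hle : (cayleyGraph G S).dist 1 x ≤ 2 := by
    have := SimpleGraph.dist_le (SimpleGraph.Walk.cons ha1 (SimpleGraph.Walk.cons ha2 SimpleGraph.Walk.nil))
    simpa using this
  have hne0 : (cayleyGraph G S).dist 1 x ≠ 0 := by
    intro h0
    have hr : (cayleyGraph G S).Reachable 1 x := ⟨SimpleGraph.Walk.cons ha1 (SimpleGraph.Walk.cons ha2 SimpleGraph.Walk.nil)⟩
    exact hx1 ((hr.dist_eq_zero_iff).mp h0).symm
  have hne1 : (cayleyGraph G S).dist 1 x ≠ 1 := by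
    intro h1
    rw [SimpleGraph.dist_eq_one_iff_adj, cayley_adj hS1 hSinv] at h1
    simp at h1
    exact hxS h1
  omega

end Helpers

/-- A connected graph is distance-regular if, for every `i`, the numbers
`cᵢ = |N(v) ∩ N_{i-1}(u)|`, `aᵢ = |N(v) ∩ N_i(u)|` and `bᵢ = |N(v) ∩ N_{i+1}(u)|`
do not depend on the choice of vertices `u, v` at distance `i`. -/
def SimpleGraph.IsDistRegular {V : Type*} (Γ : SimpleGraph V) : Prop :=
  Γ.Connected ∧ ∀ i : ℕ, ∃ c a b : ℕ, ∀ u v : V, Γ.dist u v = i →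
    (Γ.neighborSet v ∩ {w | Γ.dist u w = i - 1}).ncard = c ∧
    (Γ.neighborSet v ∩ {w | Γ.dist u w = i}).ncard = a ∧
    (Γ.neighborSet v ∩ {w | Γ.dist u w = i + 1}).ncard = b

/-- `G` is the generalized dicyclic group on the abelian subgroup `A` (of order
`2n`, `n > 1`, with unique involution `a = t ^ 2`) and the element `t`, i.e.
`G = ⟨A, t⟩` with `t² = a` and `t⁻¹ x t = x⁻¹` for all `x ∈ A`. -/
structure IsGenDicyclic {G : Type*} [Group G] (A : Subgroup G) (t : G) : Prop where
  comm : ∀ x ∈ A, ∀ y ∈ A, x * y = y * x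
  card : ∃ n : ℕ, 1 < n ∧ Nat.card A = 2 * n
  t_sq_mem : t ^ 2 ∈ A
  t_sq_order : orderOf (t ^ 2) = 2
  unique_involution : ∀ x ∈ A, orderOf x = 2 → x = t ^ 2
  gen : Subgroup.closure ((A : Set G) ∪ {t}) = ⊤
  conj : ∀ x ∈ A, t⁻¹ * x * t = x⁻¹

section Dic
variable {G : Type*} [Group G] {A : Subgroup G} {t : G}

lemma dic_xt (hG : IsGenDicyclic A t) {x : G} (hx : x ∈ A) : x * t = t * x⁻¹ := by
  rw [← hG.conj x hx]; group

lemma dic_tx (hG : IsGenDicyclic A t) {x : G} (hx : x ∈ A) : t * x = x⁻¹ * t := by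
  have h := dic_xt hG (inv_mem hx)
  rw [inv_inv] at h
  exact h.symm

lemma dic_mulAux (hG : IsGenDicyclic A t) {g g' : G} (hu : g * t⁻¹ ∈ A)
    (hv : g' * t⁻¹ ∈ A) : g * g' ∈ A := by
  have h3 : t * (g' * t⁻¹) = (g' * t⁻¹)⁻¹ * t := dic_tx hG hv
  have e : g * g' = (g * t⁻¹) * (t * (g' * t⁻¹)) * t := by group
  rw [e, h3, show (g * t⁻¹) * ((g' * t⁻¹)⁻¹ * t) * t = ((g * t⁻¹) * (g' * t⁻¹)⁻¹) * (t * t) from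
    by group, ← pow_two]
  exact mul_mem (mul_mem hu (inv_mem hv)) hG.t_sq_mem

lemma dic_tA (hG : IsGenDicyclic A t) : t ∉ A := by
  intro htA
  have hsq : ∀ x ∈ A, x * x = 1 := by
    intro x hx
    have h1 := hG.conj x hx
    have h2 := hG.comm x hx t htA
    have hxx : x = x⁻¹ := by
      calc x = t⁻¹ * (t * x) := by group
        _ = t⁻¹ * (x * t) := by rw [← h2]
        _ = t⁻¹ * x * t := by group
        _ = x⁻¹ := h1
    calc x * x = x * x⁻¹ := by rw [← hxx]
      _ = 1 := by group
  have hsub : (A : Set G) ⊆ {1, t ^ 2} := by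
    intro x hx
    rcases eq_or_ne x 1 with h | h
    · exact Or.inl h
    · right
      refine hG.unique_involution x hx ?_
      have hdvd : orderOf x ∣ 2 := orderOf_dvd_of_pow_eq_one (by rw [pow_two]; exact hsq x hx)
      have hle : orderOf x ≤ 2 := Nat.le_of_dvd two_pos hdvd
      interval_cases h' : orderOf x
      · exact absurd hdvd (by norm_num)
      · exact absurd (orderOf_eq_one_iff.mp h') h
      · rfl
  obtain ⟨n, hn, hcard⟩ := hG.card
  have hle : (A : Set G).ncard ≤ 2 := by
    refine le_trans (Set.ncard_le_ncard hsub (Set.toFinite _)) ?_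
    refine le_trans (Set.ncard_insert_le _ _) ?_
    simp
  rw [← Nat.card_coe_set_eq, SetLike.coe_sort_coe, hcard] at hle
  omega

lemma dic_decomp (hG : IsGenDicyclic A t) : ∀ g : G, g ∈ A ∨ g * t⁻¹ ∈ A := by
  intro g
  set K : Subgroup G :=
    { carrier := {g | g ∈ A ∨ g * t⁻¹ ∈ A}
      one_mem' := Or.inl (one_mem A)
      mul_mem' := by
        rintro x y (hx | hx) (hy | hy)
        · exact Or.inl (mul_mem hx hy)
        · refine Or.inr ?_
          rw [mul_assoc]
          exact mul_mem hx hy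
        · refine Or.inr ?_
          have h3 : t * y * t⁻¹ = y⁻¹ := by rw [dic_tx hG hy]; group
          have e : x * y * t⁻¹ = (x * t⁻¹) * (t * y * t⁻¹) := by group
          rw [e, h3]
          exact mul_mem hx (inv_mem hy)
        · exact Or.inl (dic_mulAux hG hx hy)
      inv_mem' := by
        rintro x (hx | hx)
        · exact Or.inl (inv_mem hx)
        · refine Or.inr ?_
          have e : x⁻¹ * t⁻¹ = (t⁻¹ * (x * t⁻¹)⁻¹ * t) * (t ^ 2)⁻¹ := by group
          rw [e, hG.conj _ (inv_mem hx), inv_inv]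
          exact mul_mem hx (inv_mem hG.t_sq_mem) } with hK
  have hle : (⊤ : Subgroup G) ≤ K := by
    rw [← hG.gen]
    refine (Subgroup.closure_le K).mpr ?_
    rintro x (hx | hx)
    · exact Or.inl hx
    · rcases hx with rfl
      exact Or.inr (by simpa using one_mem A)
  exact hle (Subgroup.mem_top g)

lemma dic_out_sq (hG : IsGenDicyclic A t) {g : G} (hg : g ∉ A) : g * g = t ^ 2 := by
  rcases dic_decomp hG g with h | h
  · exact absurd h hg
  · have hgu : g = (g * t⁻¹) * t := by group
    calc g * g = (g * t⁻¹) * (t * (g * t⁻¹)) * t := by group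
      _ = (g * t⁻¹) * ((g * t⁻¹)⁻¹ * t) * t := by rw [dic_tx hG h]
      _ = t * t := by group
      _ = t ^ 2 := (pow_two t).symm

lemma dic_out_comm (hG : IsGenDicyclic A t) {g : G} (hg : g ∉ A) {x : G} (hx : x ∈ A) :
    g * x = x⁻¹ * g := by
  rcases dic_decomp hG g with h | h
  · exact absurd h hg
  · calc g * x = (g * t⁻¹) * (t * x) := by group
      _ = (g * t⁻¹) * (x⁻¹ * t) := by rw [dic_tx hG hx]
      _ = ((g * t⁻¹) * x⁻¹) * t := by group
      _ = (x⁻¹ * (g * t⁻¹)) * t := by rw [hG.comm _ h x⁻¹ (inv_mem hx)]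
      _ = x⁻¹ * g := by group

lemma dic_prod_mem (hG : IsGenDicyclic A t) {g g' : G} (hg : g ∉ A) (hg' : g' ∉ A) :
    g * g' ∈ A := by
  rcases dic_decomp hG g with h | h
  · exact absurd h hg
  rcases dic_decomp hG g' with h' | h'
  · exact absurd h' hg'
  exact dic_mulAux hG h h'

end Dic

/-- Claim 2.4: if the Cayley graph is distance-regular, then `[G:H] = 2`
and `o(s) ≥ 4`. -/
theorem claim1_index_two
    {G : Type*} [Group G] (A : Subgroup G) (t : G) (hG : IsGenDicyclic A t)
    (S : Set G) (hS1 : (1 : G) ∉ S) (hSinv : ∀ x ∈ S, x⁻¹ ∈ S)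
    (hSgen : Subgroup.closure S = ⊤)
    (s : G) (hsS : s ∈ S) (hsA : s ∈ A)
    (H : Subgroup G) (hHdef : H = Subgroup.closure (S \ {s, s⁻¹})) (hH : H ≠ ⊤)
    (hdrg : (cayleyGraph G S).IsDistRegular) :
    H.index = 2 ∧ 4 ≤ orderOf s := by
  classical
  set Γ := cayleyGraph G S with hΓ
  obtain ⟨hconn, hpar⟩ := hdrg
  have hsinvS : s⁻¹ ∈ S := hSinv s hsS
  have hs_ne1 : s ≠ 1 := fun h => hS1 (h ▸ hsS)
  have htA := dic_tA hG
  have hTH : ∀ w ∈ S, w ≠ s → w ≠ s⁻¹ → w ∈ H := by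
    intro w hw h1 h2
    rw [hHdef]
    exact Subgroup.subset_closure ⟨hw, by simp [h1, h2]⟩
  have hsnotH : s ∉ H := by
    intro hs
    apply hH
    rw [eq_top_iff, ← hSgen]
    refine (Subgroup.closure_le H).mpr ?_
    intro w hw
    by_cases h1 : w = s
    · exact h1 ▸ hs
    by_cases h2 : w = s⁻¹
    · exact h2 ▸ inv_mem hs
    · exact hTH w hw h1 h2
  have hsinvnotH : s⁻¹ ∉ H := fun h => hsnotH (by simpa using inv_mem h)
  have hScases : ∀ w ∈ S, w = s ∨ w = s⁻¹ ∨ w ∈ H := by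
    intro w hw
    by_cases h1 : w = s
    · exact Or.inl h1
    by_cases h2 : w = s⁻¹
    · exact Or.inr (Or.inl h2)
    exact Or.inr (Or.inr (hTH w hw h1 h2))
  have hSAH : ∀ w ∈ S, w ∉ A → w ∈ H := by
    intro w hw hwA
    rcases hScases w hw with rfl | rfl | h
    · exact absurd hsA hwA
    · exact absurd (inv_mem hsA) hwA
    · exact h
  have hgex : ∃ g ∈ S, g ∉ A := by
    by_contra hcon
    push_neg at hcon
    apply htA
    have hle : (⊤ : Subgroup G) ≤ A := by
      rw [← hSgen]; exact (Subgroup.closure_le A).mpr hcon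
    exact hle (Subgroup.mem_top t)
  obtain ⟨g, hgS, hgA⟩ := hgex
  have hgH : g ∈ H := hSAH g hgS hgA
  have hginvS : g⁻¹ ∈ S := hSinv g hgS
  have hg_ne1 : g ≠ 1 := fun h => hS1 (h ▸ hgS)
  have hgg : g * g = t ^ 2 := dic_out_sq hG hgA
  have haA : (t : G) ^ 2 ∈ A := hG.t_sq_mem
  have haH : (t : G) ^ 2 ∈ H := hgg ▸ mul_mem hgH hgH
  have haa : (t : G) ^ 2 * t ^ 2 = 1 := by
    have h := pow_orderOf_eq_one (t ^ 2)
    rw [hG.t_sq_order, pow_two] at h; exact h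
  have ha_ne1 : (t : G) ^ 2 ≠ 1 := by
    intro h
    have h2 := hG.t_sq_order
    rw [h, orderOf_one] at h2; omega
  have hAfin : Finite ↥A := by
    obtain ⟨n, hn, hc⟩ := hG.card
    exact Nat.finite_of_card_ne_zero (by omega)
  have hGfin : Finite G := by
    have hsurj : Function.Surjective
        (fun p : ↥A × Bool => if p.2 then (p.1 : G) * t else (p.1 : G)) := by
      intro x
      rcases dic_decomp hG x with h | h
      · exact ⟨(⟨x, h⟩, false), by simp⟩
      · exact ⟨(⟨x * t⁻¹, h⟩, true), by simp⟩
    exact Finite.of_surjective _ hsurj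
  have horder2 : orderOf s ≠ 2 := by
    intro h2
    apply hsnotH
    rw [hG.unique_involution s hsA h2]
    exact haH
  -- distance-regularity consequences
  have hsph1 : {w | Γ.dist 1 w = 1} = S := by
    ext w
    simp only [Set.mem_setOf_eq, SimpleGraph.dist_eq_one_iff_adj, hΓ,
      cayley_adj hS1 hSinv, inv_one, one_mul]
  have hc2 : ∀ x y : G, Γ.dist 1 x = 2 → Γ.dist 1 y = 2 →
      (Γ.neighborSet x ∩ S).ncard = (Γ.neighborSet y ∩ S).ncard := by
    intro x y hx hy
    obtain ⟨c, a, b, hcab⟩ := hpar 2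
    have h1 := (hcab 1 x hx).1
    have h2 := (hcab 1 y hy).1
    rw [show (2 : ℕ) - 1 = 1 from rfl, hsph1] at h1 h2
    exact h1.trans h2.symm
  have hA1 : ∀ x y : G, Γ.dist 1 x = 1 → Γ.dist 1 y = 1 →
      (Γ.neighborSet x ∩ S).ncard = (Γ.neighborSet y ∩ S).ncard := by
    intro x y hx hy
    obtain ⟨c, a, b, hcab⟩ := hpar 1
    have h1 := (hcab 1 x hx).2.1
    have h2 := (hcab 1 y hy).2.1
    rw [hsph1] at h1 h2
    exact h1.trans h2.symm
  have hmem : ∀ v w : G, w ∈ Γ.neighborSet v ∩ S ↔ v⁻¹ * w ∈ S ∧ w ∈ S := by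
    intro v w
    rw [Set.mem_inter_iff, hΓ, cayley_mem_nb hS1 hSinv]
  by_cases hs2 : s * s ∈ H
  · -- Case A : [G : H] = 2 and orderOf s ≥ 4
    have hconjH : ∀ h ∈ H, s⁻¹ * h * s ∈ H := by
      intro h hh
      have hh' : h ∈ Subgroup.closure (S \ {s, s⁻¹}) := hHdef ▸ hh
      clear hh
      induction hh' using Subgroup.closure_induction with
      | mem x hx =>
          obtain ⟨hxS, hxns⟩ := hx
          simp only [Set.mem_insert_iff, Set.mem_singleton_iff, not_or] at hxns
          have hxH : x ∈ H := hTH x hxS hxns.1 hxns.2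
          by_cases hxA : x ∈ A
          · have e : s⁻¹ * x * s = x := by
              rw [mul_assoc, hG.comm x hxA s hsA]; group
            rw [e]; exact hxH
          · have hxx : x * s = s⁻¹ * x := dic_out_comm hG hxA hsA
            have e : s⁻¹ * x * s = (s * s)⁻¹ * x := by
              rw [mul_assoc, hxx]; group
            rw [e]; exact mul_mem (inv_mem hs2) hxH
      | one => simpa using one_mem H
      | mul x y hx hy ihx ihy =>
          have e : s⁻¹ * (x * y) * s = (s⁻¹ * x * s) * (s⁻¹ * y * s) := by group
          rw [e]; exact mul_mem ihx ihy
      | inv x hx ihx =>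
          have e : s⁻¹ * x⁻¹ * s = (s⁻¹ * x * s)⁻¹ := by group
          rw [e]; exact inv_mem ihx
    have hdecomp : ∀ x : G, x ∈ H ∨ s⁻¹ * x ∈ H := by
      set K : Subgroup G :=
        { carrier := {x | x ∈ H ∨ s⁻¹ * x ∈ H}
          one_mem' := Or.inl (one_mem H)
          mul_mem' := by
            rintro x y (hx | hx) (hy | hy)
            · exact Or.inl (mul_mem hx hy)
            · refine Or.inr ?_
              have e : s⁻¹ * (x * y) = (s⁻¹ * x * s) * (s⁻¹ * y) := by group
              rw [e]; exact mul_mem (hconjH x hx) hy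
            · refine Or.inr ?_
              have e : s⁻¹ * (x * y) = (s⁻¹ * x) * y := by group
              rw [e]; exact mul_mem hx hy
            · refine Or.inl ?_
              have e : x * y = (s * s) * ((s⁻¹ * (s⁻¹ * x) * s) * (s⁻¹ * y)) := by group
              rw [e]; exact mul_mem hs2 (mul_mem (hconjH _ hx) hy)
          inv_mem' := by
            rintro x (hx | hx)
            · exact Or.inl (inv_mem hx)
            · refine Or.inr ?_
              have e : s⁻¹ * x⁻¹ = (s⁻¹ * (s⁻¹ * x)⁻¹ * s) * (s * s)⁻¹ := by group
              rw [e]; exact mul_mem (hconjH _ (inv_mem hx)) (inv_mem hs2) } with hK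
      have hle : (⊤ : Subgroup G) ≤ K := by
        rw [← hSgen]
        refine (Subgroup.closure_le K).mpr ?_
        intro w hw
        rcases hScases w hw with rfl | rfl | h
        · exact Or.inr (by simpa using one_mem H)
        · refine Or.inr ?_
          rw [show s⁻¹ * s⁻¹ = (s * s)⁻¹ from by group]
          exact inv_mem hs2
        · exact Or.inl h
      intro x; exact hle (Subgroup.mem_top x)
    constructor
    · rw [Subgroup.index_eq_two_iff]
      refine ⟨s, fun b => ?_⟩
      rw [Xor]
      by_cases hb : b ∈ H
      · refine Or.inr ⟨hb, fun hbs => hsnotH ?_⟩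
        have e : s = b⁻¹ * (b * s) := by group
        rw [e]; exact mul_mem (inv_mem hb) hbs
      · refine Or.inl ⟨?_, hb⟩
        rcases hdecomp b with h | h
        · exact absurd h hb
        have e : b * s = (s * s) * (s⁻¹ * (s⁻¹ * b) * s) := by group
        rw [e]; exact mul_mem hs2 (hconjH _ h)
    · have h0 : orderOf s ≠ 0 := (orderOf_pos s).ne'
      have h1 : orderOf s ≠ 1 := fun h => hs_ne1 (orderOf_eq_one_iff.mp h)
      have h3 : orderOf s ≠ 3 := by
        intro h3
        have hcube : s * s * s = 1 := by
          have h := pow_orderOf_eq_one s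
          rw [h3, show s ^ 3 = s * s * s from by rw [pow_succ, pow_two]] at h
          exact h
        apply hsnotH
        have e : s = (s * s)⁻¹ * (s * s * s) := by group
        rw [e, hcube, mul_one]
        exact inv_mem hs2
      omega
  · -- Case B : s * s ∉ H, derive a contradiction
    exfalso
    have hss1 : s * s ≠ 1 := fun h => hs2 (h ▸ one_mem H)
    have hgs : g * s = s⁻¹ * g := dic_out_comm hG hgA hsA
    have hgsinv : g * s⁻¹ = s * g := by
      have h := dic_out_comm hG hgA (inv_mem hsA)
      rwa [inv_inv] at h
    -- the vertex s*g is at distance 2 from 1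
    have hsg_ne1 : s * g ≠ 1 := by
      intro h
      apply hgA
      rw [show g = s⁻¹ * (s * g) from by group, h, mul_one]
      exact inv_mem hsA
    have hsgS : s * g ∉ S := by
      intro hm
      rcases hScases _ hm with h | h | h
      · apply hg_ne1
        rw [show g = s⁻¹ * (s * g) from by group, h, inv_mul_cancel]
      · apply hgA
        rw [show g = s⁻¹ * (s * g) from by group, h]
        exact mul_mem (inv_mem hsA) (inv_mem hsA)
      · apply hsnotH
        rw [show s = (s * g) * g⁻¹ from by group]
        exact mul_mem h (inv_mem hgH)
    have hdsg : Γ.dist 1 (s * g) = 2 :=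
      cayley_dist_two hS1 hSinv hsg_ne1 hsgS hsS
        (by rw [show s⁻¹ * (s * g) = g from by group]; exact hgS)
    -- common neighbours of 1 and s*g are exactly {g, s}
    have hcsg : Γ.neighborSet (s * g) ∩ S = {g, s} := by
      ext w
      rw [hmem]
      simp only [Set.mem_insert_iff, Set.mem_singleton_iff]
      constructor
      · rintro ⟨hy, hwS⟩
        set y := (s * g)⁻¹ * w with hy_def
        have hw_eq : w = s * g * y := by rw [hy_def]; group
        by_cases hyA : y ∈ A
        · have hwA : w ∉ A := by
            intro hwA'
            apply hgA
            rw [show g = s⁻¹ * w * y⁻¹ from by rw [hw_eq]; group]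
            exact mul_mem (mul_mem (inv_mem hsA) hwA') (inv_mem hyA)
          have hwH : w ∈ H := hSAH w hwS hwA
          rcases hScases y hy with h | h | h
          · left
            rw [hw_eq, h, show s * g * s = s * (g * s) from by group, hgs]
            group
          · exfalso; apply hs2
            have e : w = (s * s) * g := by
              rw [hw_eq, h, show s * g * s⁻¹ = s * (g * s⁻¹) from by group, hgsinv]
              group
            rw [show s * s = w * g⁻¹ from by rw [e]; group]
            exact mul_mem hwH (inv_mem hgH)
          · exfalso; apply hsnotH
            rw [show s = w * y⁻¹ * g⁻¹ from by rw [hw_eq]; group]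
            exact mul_mem (mul_mem hwH (inv_mem h)) (inv_mem hgH)
        · have hyH : y ∈ H := hSAH y hy hyA
          rcases hScases w hwS with h | h | h
          · right; exact h
          · exfalso; apply hs2
            have e : g * y = s⁻¹ * s⁻¹ := by
              rw [show g * y = s⁻¹ * w from by rw [hw_eq]; group, h]
            rw [show s * s = (g * y)⁻¹ from by rw [e, mul_inv_rev, inv_inv]]
            exact inv_mem (mul_mem hgH hyH)
          · exfalso; apply hsnotH
            rw [show s = w * y⁻¹ * g⁻¹ from by rw [hw_eq]; group]
            exact mul_mem (mul_mem h (inv_mem hyH)) (inv_mem hgH)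
      · rintro (h | h)
        · rw [h]
          refine ⟨?_, hgS⟩
          rw [show (s * g)⁻¹ * g = g⁻¹ * (s⁻¹ * g) from by group, ← hgs,
            show g⁻¹ * (g * s) = s from by group]
          exact hsS
        · rw [h]
          refine ⟨?_, hsS⟩
          rw [show (s * g)⁻¹ * s = g⁻¹ from by group]
          exact hginvS
    have hnsg : (Γ.neighborSet (s * g) ∩ S).ncard = 2 := by
      rw [hcsg]
      exact Set.ncard_pair (fun h => hsnotH (h ▸ hgH))
    by_cases h3 : orderOf s = 3
    · -- subcase : orderOf s = 3
      have hcube : s * s * s = 1 := by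
        have h := pow_orderOf_eq_one s
        rwa [h3, show s ^ 3 = s * s * s from by rw [pow_succ, pow_two]] at h
      have hssinv : s * s = s⁻¹ := eq_inv_of_mul_eq_one_left hcube
      have hds : Γ.dist 1 s = 1 := cayley_dist_one hS1 hSinv hsS
      have hcs : Γ.neighborSet s ∩ S = {s⁻¹} := by
        ext w
        rw [hmem]
        simp only [Set.mem_singleton_iff]
        constructor
        · rintro ⟨hy, hwS⟩
          set y := s⁻¹ * w with hy_def
          have hw_eq : w = s * y := by rw [hy_def]; group
          by_cases hyA : y ∈ A
          · rcases hScases w hwS with h | h | h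
            · exfalso; apply hS1
              have e : y = 1 := by rw [hy_def, h, inv_mul_cancel]
              exact e ▸ hy
            · exact h
            · rcases hScases y hy with h' | h' | h'
              · exfalso; apply hsinvnotH
                have hws : w = s⁻¹ := by rw [hw_eq, h']; exact hssinv
                exact hws ▸ h
              · exfalso; apply hS1
                have e : w = 1 := by rw [hw_eq, h', mul_inv_cancel]
                exact e ▸ hwS
              · exfalso; apply hsnotH
                rw [show s = w * y⁻¹ from by rw [hw_eq]; group]
                exact mul_mem h (inv_mem h')
          · exfalso
            have hyH := hSAH y hy hyA
            have hwA : w ∉ A := by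
              intro hwA'
              apply hyA
              rw [hy_def]
              exact mul_mem (inv_mem hsA) hwA'
            have hwH := hSAH w hwS hwA
            apply hsnotH
            rw [show s = w * y⁻¹ from by rw [hw_eq]; group]
            exact mul_mem hwH (inv_mem hyH)
        · rintro rfl
          refine ⟨?_, hsinvS⟩
          rw [show s⁻¹ * s⁻¹ = (s * s)⁻¹ from by group, hssinv, inv_inv]
          exact hsS
      have hcs1 : (Γ.neighborSet s ∩ S).ncard = 1 := by
        rw [hcs]; exact Set.ncard_singleton _
      have hganotin : ∀ w : G, w ∉ A → (t ^ 2 : G)⁻¹ * w = w⁻¹ := by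
        intro w hwA
        have h := dic_out_sq hG hwA
        rw [← h]; group
      have hg4 : g * g * (g * g) = 1 := by rw [hgg]; exact haa
      have hmem_g : g ∈ Γ.neighborSet (t ^ 2) ∩ S := by
        rw [hmem]
        exact ⟨by rw [hganotin g hgA]; exact hginvS, hgS⟩
      have hmem_ginv : g⁻¹ ∈ Γ.neighborSet (t ^ 2) ∩ S := by
        rw [hmem]
        refine ⟨?_, hginvS⟩
        have e : (t ^ 2 : G)⁻¹ * g⁻¹ = g := by
          rw [← hgg]
          have e2 : (g * g)⁻¹ * g⁻¹ * g⁻¹ = 1 := by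
            rw [show (g * g)⁻¹ * g⁻¹ * g⁻¹ = (g * g * (g * g))⁻¹ from by group, hg4, inv_one]
          calc (g * g)⁻¹ * g⁻¹ = ((g * g)⁻¹ * g⁻¹ * g⁻¹) * g := by group
            _ = g := by rw [e2, one_mul]
        rw [e]; exact hgS
      have hgne : g ≠ g⁻¹ := by
        intro h
        apply ha_ne1
        rw [← hgg]
        nth_rewrite 2 [h]
        exact mul_inv_cancel g
      have haS : (t : G) ^ 2 ∉ S := by
        intro haS'
        have hda : Γ.dist 1 (t ^ 2) = 1 := cayley_dist_one hS1 hSinv haS'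
        have h1 := hA1 (t ^ 2) s hda hds
        rw [hcs1] at h1
        have h2 : 2 ≤ (Γ.neighborSet (t ^ 2) ∩ S).ncard := by
          have hsub : ({g, g⁻¹} : Set G) ⊆ Γ.neighborSet (t ^ 2) ∩ S :=
            Set.insert_subset_iff.mpr ⟨hmem_g, Set.singleton_subset_iff.mpr hmem_ginv⟩
          calc 2 = ({g, g⁻¹} : Set G).ncard := (Set.ncard_pair hgne).symm
            _ ≤ _ := Set.ncard_le_ncard hsub (Set.toFinite _)
        omega
      have hda2 : Γ.dist 1 (t ^ 2) = 2 :=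
        cayley_dist_two hS1 hSinv ha_ne1 haS hgS
          (by rw [show g⁻¹ * (t ^ 2 : G) = g from by rw [← hgg]; group]; exact hgS)
      have hX := hc2 _ _ hda2 hdsg
      rw [hnsg] at hX
      have hXeq : Γ.neighborSet (t ^ 2) ∩ S = {g, g⁻¹} := by
        refine (Set.eq_of_subset_of_ncard_le ?_ ?_ (Set.toFinite _)).symm
        · exact Set.insert_subset_iff.mpr ⟨hmem_g, Set.singleton_subset_iff.mpr hmem_ginv⟩
        · rw [hX, Set.ncard_pair hgne]
      have hTA : ∀ τ, τ ∈ S → τ ∉ A → τ = g ∨ τ = g⁻¹ := by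
        intro τ hτS hτA
        have hτ : τ ∈ Γ.neighborSet (t ^ 2) ∩ S := by
          rw [hmem]
          exact ⟨by rw [hganotin τ hτA]; exact hSinv τ hτS, hτS⟩
        rw [hXeq] at hτ
        simpa using hτ
      have hdg : Γ.dist 1 g = 1 := cayley_dist_one hS1 hSinv hgS
      have hcgempty : Γ.neighborSet g ∩ S = ∅ := by
        ext w
        simp only [Set.mem_empty_iff_false, iff_false]
        rw [hmem]
        rintro ⟨hy, hwS⟩
        set y := g⁻¹ * w with hy_def
        have hw_eq : w = g * y := by rw [hy_def]; group
        by_cases hyA : y ∈ A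
        · have hwA : w ∉ A := by
            intro hwA'
            apply hgA
            rw [show g = w * y⁻¹ from by rw [hw_eq]; group]
            exact mul_mem hwA' (inv_mem hyA)
          rcases hTA w hwS hwA with h | h
          · apply hS1
            have e : y = 1 := by rw [hy_def, h, inv_mul_cancel]
            exact e ▸ hy
          · apply haS
            have e : y = t ^ 2 := by
              rw [hy_def, h, show g⁻¹ * g⁻¹ = (g * g)⁻¹ from by group, hgg]
              exact inv_eq_of_mul_eq_one_left haa
            exact e ▸ hy
        · rcases hTA y hy hyA with h | h
          · apply haS
            have e : w = t ^ 2 := by rw [hw_eq, h, hgg]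
            exact e ▸ hwS
          · apply hS1
            have e : w = 1 := by rw [hw_eq, h, mul_inv_cancel]
            exact e ▸ hwS
      have hfin := hA1 g s hdg hds
      rw [hcgempty, hcs1, Set.ncard_empty] at hfin
      omega
    · -- subcase : orderOf s ≠ 3
      have h1ord : orderOf s ≠ 1 := fun h => hs_ne1 (orderOf_eq_one_iff.mp h)
      have hpos : 0 < orderOf s := orderOf_pos s
      have hss_ne_sinv : s * s ≠ s⁻¹ := by
        intro h
        have hcube : s ^ 3 = 1 := by
          rw [show s ^ 3 = s * s * s from by rw [pow_succ, pow_two], h, inv_mul_cancel]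
        have hdvd := orderOf_dvd_of_pow_eq_one hcube
        have hle := Nat.le_of_dvd (by norm_num) hdvd
        have : orderOf s = 2 ∨ orderOf s = 3 := by omega
        rcases this with h' | h'
        · exact horder2 h'
        · exact h3 h'
      have hs4 : orderOf s ≠ 4 := by
        intro h4
        apply hs2
        have h22 : orderOf (s ^ 2) = 2 := by
          rw [orderOf_pow s, h4]
          decide
        have he := hG.unique_involution (s ^ 2) (pow_mem hsA 2) h22
        rw [pow_two] at he
        rw [he]
        exact haH
      have hss4 : s * s * (s * s) ≠ 1 := by
        intro h
        have hpow : s ^ 4 = 1 := by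
          rw [show s ^ 4 = s * s * (s * s) from by
            rw [show (4 : ℕ) = 2 + 2 from rfl, pow_add, pow_two]]
          exact h
        have hdvd := orderOf_dvd_of_pow_eq_one hpow
        have hle := Nat.le_of_dvd (by norm_num) hdvd
        have hm3 : orderOf s = 3 := by omega
        exact h3 hm3
      have hssS : s * s ∉ S := by
        intro hm
        rcases hScases _ hm with h | h | h
        · exact hs_ne1 (mul_left_cancel (show s * s = s * 1 from by rw [mul_one]; exact h))
        · exact hss_ne_sinv h
        · exact hs2 h
      have hdss : Γ.dist 1 (s * s) = 2 :=
        cayley_dist_two hS1 hSinv hss1 hssS hsS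
          (by rw [show s⁻¹ * (s * s) = s from by group]; exact hsS)
      have hXss := hc2 _ _ hdss hdsg
      rw [hnsg] at hXss
      by_cases hs3S : s * s * s ∈ S
      · have hset : Γ.neighborSet (s * s) ∩ S = {s, s * s * s, s⁻¹} := by
          ext w
          rw [hmem]
          simp only [Set.mem_insert_iff, Set.mem_singleton_iff]
          constructor
          · rintro ⟨hy, hwS⟩
            set y := (s * s)⁻¹ * w with hy_def
            have hw_eq : w = s * s * y := by rw [hy_def]; group
            rcases hScases w hwS with h | h | h
            · exact Or.inl h
            · exact Or.inr (Or.inr h)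
            · rcases hScases y hy with h' | h' | h'
              · exact Or.inr (Or.inl (by rw [hw_eq, h']))
              · exact Or.inl (by rw [hw_eq, h']; group)
              · exfalso; apply hs2
                rw [show s * s = w * y⁻¹ from by rw [hw_eq]; group]
                exact mul_mem h (inv_mem h')
          · rintro (h | h | h)
            · rw [h]
              exact ⟨by rw [show (s * s)⁻¹ * s = s⁻¹ from by group]; exact hsinvS, hsS⟩
            · rw [h]
              exact ⟨by rw [show (s * s)⁻¹ * (s * s * s) = s from by group]; exact hsS, hs3S⟩
            · rw [h]
              refine ⟨?_, hsinvS⟩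
              rw [show (s * s)⁻¹ * s⁻¹ = (s * s * s)⁻¹ from by group]
              exact hSinv _ hs3S
        rw [hset] at hXss
        have hd1 : s ≠ s * s * s := by
          intro h
          have h' : s * 1 = s * (s * s) := by rw [mul_one]; nth_rewrite 1 [h]; group
          exact hss1 (mul_left_cancel h').symm
        have hd2 : s ≠ s⁻¹ := by
          intro h
          apply hss1
          nth_rewrite 2 [h]
          exact mul_inv_cancel s
        have hd3 : s * s * s ≠ s⁻¹ := by
          intro h
          apply hss4
          rw [show s * s * (s * s) = (s * s * s) * s from by group, h, inv_mul_cancel]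
        rw [Set.ncard_insert_of_notMem (by
            intro hmem'
            rcases hmem' with h | h
            · exact hd1 h
            · exact hd2 (by simpa using h)) (Set.toFinite _),
          Set.ncard_pair hd3] at hXss
        omega
      · have hset : Γ.neighborSet (s * s) ∩ S = {s} := by
          ext w
          rw [hmem]
          simp only [Set.mem_singleton_iff]
          constructor
          · rintro ⟨hy, hwS⟩
            set y := (s * s)⁻¹ * w with hy_def
            have hw_eq : w = s * s * y := by rw [hy_def]; group
            rcases hScases w hwS with h | h | h
            · exact h
            · exfalso; apply hs3S
              have e : y⁻¹ = s * s * s := by rw [hy_def, h, mul_inv_rev, inv_inv, inv_inv, ← mul_assoc]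
              rw [← e]
              exact hSinv y hy
            · rcases hScases y hy with h' | h' | h'
              · exfalso; apply hs3S
                have e : w = s * s * s := by rw [hw_eq, h']
                exact e ▸ hwS
              · rw [hw_eq, h']; group
              · exfalso; apply hs2
                rw [show s * s = w * y⁻¹ from by rw [hw_eq]; group]
                exact mul_mem h (inv_mem h')
          · rintro h
            rw [h]
            exact ⟨by rw [show (s * s)⁻¹ * s = s⁻¹ from by group]; exact hsinvS, hsS⟩
        rw [hset, Set.ncard_singleton] at hXss
        omega
end

section
/- Let G be a generalized dicyclic group generated by A and t, let S be an inverse-closed subset of G∖{1} with ⟨S⟩ = G, let s ∈ S ∩ A be such that H = ⟨S∖{s,s⁻¹}⟩ ≠ G, and suppose the Cayley graph Γ = Cay(G,S) is distance-regular with intersection numbers a₁ and c₂. Then: (i) a₁ ∈ {0,2}, and a₁ = 2 if and only if s² ∈ S; (ii) c₂ ∈ {2,4}, and if the order of s is at least 6 then c₂ = 4. -/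
open SimpleGraph Pointwise

namespace Claim2Aux

variable {G : Type*} [Group G]

/-- Bundle of the standing hypotheses. -/
structure Ctx (A : Subgroup G) (t : G) (S : Set G) (s : G) : Prop where
  hG : IsGenDicyclic A t
  hS1 : (1 : G) ∉ S
  hSinv : ∀ x ∈ S, x⁻¹ ∈ S
  hSgen : Subgroup.closure S = ⊤
  hsS : s ∈ S
  hsA : s ∈ A
  hH : Subgroup.closure (S \ {s, s⁻¹}) ≠ ⊤

variable {A : Subgroup G} {t : G} {S : Set G} {s : G}

/-! ### ncard helpers -/

lemma ncard3 {a b c : G} (hab : a ≠ b) (hac : a ≠ c) (hbc : b ≠ c) :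
    ({a, b, c} : Set G).ncard = 3 := by
  rw [Set.ncard_insert_of_notMem (by simp [hab, hac])
      ((Set.finite_singleton c).insert b),
    Set.ncard_insert_of_notMem (by simp [hbc]) (Set.finite_singleton c),
    Set.ncard_singleton]

lemma ncard4 {a b c d : G} (hab : a ≠ b) (hac : a ≠ c) (had : a ≠ d)
    (hbc : b ≠ c) (hbd : b ≠ d) (hcd : c ≠ d) :
    ({a, b, c, d} : Set G).ncard = 4 := by
  rw [Set.ncard_insert_of_notMem (by simp [hab, hac, had])
      (((Set.finite_singleton d).insert c).insert b), ncard3 hbc hbd hcd]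

/-! ### group-theoretic facts -/

lemma Ctx.a_ne_one (c : Ctx A t S s) : t * t ≠ 1 := by
  intro h
  have h2 : t ^ 2 = 1 := by rw [pow_two]; exact h
  have := c.hG.t_sq_order
  rw [h2, orderOf_one] at this
  omega

lemma Ctx.a_sq (c : Ctx A t S s) : (t * t) * (t * t) = 1 := by
  have := pow_orderOf_eq_one (t ^ 2)
  rw [c.hG.t_sq_order] at this
  have h : (t ^ 2) * (t ^ 2) = 1 := by rw [← pow_two (t^2)]; exact this
  rw [pow_two] at h; exact h

lemma Ctx.a_inv (c : Ctx A t S s) : (t * t)⁻¹ = t * t :=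
  inv_eq_of_mul_eq_one_right c.a_sq

lemma Ctx.a_mem (c : Ctx A t S s) : t * t ∈ A := by
  rw [← pow_two]; exact c.hG.t_sq_mem

lemma Ctx.exists_sq_ne_one (c : Ctx A t S s) : ∃ x ∈ A, x * x ≠ 1 := by
  by_contra hcon
  push_neg at hcon
  have hsub : (A : Set G) ⊆ {1, t * t} := by
    intro x hx
    by_cases hx1 : x = 1
    · exact Or.inl hx1
    · right
      have hord : orderOf x = 2 := by
        haveI : Fact (Nat.Prime 2) := ⟨Nat.prime_two⟩
        exact orderOf_eq_prime (by rw [pow_two]; exact hcon x hx) hx1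
      have := c.hG.unique_involution x hx hord
      simp [this, pow_two]
  obtain ⟨n, hn, hcard⟩ := c.hG.card
  have h4 : 4 ≤ Nat.card A := by omega
  have hA : Nat.card A = (A : Set G).ncard := by
    rw [← Nat.card_coe_set_eq]
    rfl
  have hle : (A : Set G).ncard ≤ ({1, t * t} : Set G).ncard :=
    Set.ncard_le_ncard hsub ((Set.finite_singleton _).insert _)
  have : ({1, t * t} : Set G).ncard = 2 := Set.ncard_pair (fun h => c.a_ne_one h.symm)
  omega

lemma Ctx.t_not_A (c : Ctx A t S s) : t ∉ A := by
  intro ht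
  obtain ⟨x, hx, hxx⟩ := c.exists_sq_ne_one
  have h1 := c.hG.conj x hx
  have h2 := c.hG.comm x hx t ht
  rw [show t⁻¹ * x * t = t⁻¹ * (x * t) by group, h2, show t⁻¹ * (t * x) = x by group] at h1
  exact hxx (by rw [mul_eq_one_iff_eq_inv]; exact h1)

lemma Ctx.t_mul (c : Ctx A t S s) {x : G} (hx : x ∈ A) : t * x = x⁻¹ * t := by
  have h1 := c.hG.conj x⁻¹ (A.inv_mem hx)
  have : x⁻¹ * t = t * x⁻¹⁻¹ := by
    rw [← h1]; group
  rw [this, inv_inv]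

lemma Ctx.mul_t (c : Ctx A t S s) {x : G} (hx : x ∈ A) : x * t = t * x⁻¹ := by
  have h1 := c.hG.conj x hx
  rw [← h1]; group

lemma Ctx.decomp (c : Ctx A t S s) : ∀ g : G, g ∈ A ∨ g * t⁻¹ ∈ A := by
  set K : Subgroup G :=
    { carrier := {g : G | g ∈ A ∨ g * t⁻¹ ∈ A}
      one_mem' := Or.inl A.one_mem
      mul_mem' := by
        rintro g h (hg | hg) (hh | hh)
        · exact Or.inl (A.mul_mem hg hh)
        · right
          have : g * h * t⁻¹ = g * (h * t⁻¹) := by group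
          rw [this]; exact A.mul_mem hg hh
        · right
          have key : g * h * t⁻¹ = (g * t⁻¹) * (t * h * t⁻¹) := by group
          have h2 : t * h * t⁻¹ = h⁻¹ := by
            rw [c.t_mul hh]; group
          rw [key, h2]; exact A.mul_mem hg (A.inv_mem hh)
        · left
          have key : g * h = (g * t⁻¹) * (t * (h * t⁻¹) * t⁻¹) * (t * t) := by group
          have h2 : t * (h * t⁻¹) * t⁻¹ = (h * t⁻¹)⁻¹ := by
            rw [c.t_mul hh]; group
          rw [key, h2]; exact A.mul_mem (A.mul_mem hg (A.inv_mem hh)) c.a_mem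
      inv_mem' := by
        rintro g (hg | hg)
        · exact Or.inl (A.inv_mem hg)
        · right
          have key : g⁻¹ * t⁻¹ = (t⁻¹ * (g * t⁻¹)⁻¹ * t) * (t * t)⁻¹ := by group
          have h2 : t⁻¹ * (g * t⁻¹)⁻¹ * t = (g * t⁻¹)⁻¹⁻¹ := c.hG.conj _ (A.inv_mem hg)
          rw [key, h2, inv_inv]
          exact A.mul_mem hg (A.inv_mem c.a_mem) }
  intro g
  have hsub : Subgroup.closure ((A : Set G) ∪ {t}) ≤ K := by
    apply Subgroup.closure_le _ |>.mpr
    rintro x (hx | hx)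
    · exact Or.inl hx
    · rw [Set.mem_singleton_iff] at hx
      subst hx
      exact Or.inr (by rw [mul_inv_cancel]; exact A.one_mem)
  have : g ∈ K := hsub (by rw [c.hG.gen]; trivial)
  exact this

lemma Ctx.conj_nonA (c : Ctx A t S s) {u x : G} (hu : u ∉ A) (hx : x ∈ A) :
    u⁻¹ * (x * u) = x⁻¹ := by
  rcases c.decomp u with h | h
  · exact absurd h hu
  · set y := u * t⁻¹ with hy
    have hu' : u = y * t := by rw [hy]; group
    have hcy : x * y = y * x := c.hG.comm x hx y h
    calc u⁻¹ * (x * u) = t⁻¹ * (y⁻¹ * (x * y)) * t := by rw [hu']; group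
    _ = t⁻¹ * x * t := by rw [hcy]; group
    _ = x⁻¹ := c.hG.conj x hx

lemma Ctx.mul_nonA (c : Ctx A t S s) {u x : G} (hu : u ∉ A) (hx : x ∈ A) :
    u * x = x⁻¹ * u := by
  have h : u⁻¹ * (x⁻¹ * u) = x := by rw [c.conj_nonA hu (A.inv_mem hx), inv_inv]
  have h2 : u * (u⁻¹ * (x⁻¹ * u)) = u * x := by rw [h]
  rw [show u * (u⁻¹ * (x⁻¹ * u)) = x⁻¹ * u from by group] at h2
  exact h2.symm

lemma Ctx.nonA_mul (c : Ctx A t S s) {u x : G} (hu : u ∉ A) (hx : x ∈ A) :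
    x * u = u * x⁻¹ := by
  have h2 : u * (u⁻¹ * (x * u)) = u * x⁻¹ := by rw [c.conj_nonA hu hx]
  rw [show u * (u⁻¹ * (x * u)) = x * u from by group] at h2
  exact h2

lemma Ctx.conj_cases (c : Ctx A t S s) {x : G} (hx : x ∈ A) (w : G) :
    w⁻¹ * (x * w) = x ∨ w⁻¹ * (x * w) = x⁻¹ := by
  by_cases hw : w ∈ A
  · left
    rw [c.hG.comm x hx w hw]; group
  · exact Or.inr (c.conj_nonA hw hx)

lemma Ctx.sq_nonA (c : Ctx A t S s) {u : G} (hu : u ∉ A) : u * u = t * t := by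
  rcases c.decomp u with h | h
  · exact absurd h hu
  · set y := u * t⁻¹ with hy
    have hu' : u = y * t := by rw [hy]; group
    have h2 : t * y = y⁻¹ * t := c.t_mul h
    calc u * u = y * (t * y) * t := by rw [hu']; group
    _ = y * (y⁻¹ * t) * t := by rw [h2]
    _ = t * t := by group

lemma Ctx.a_comm (c : Ctx A t S s) (g : G) : g * (t * t) = (t * t) * g := by
  rcases c.decomp g with h | h
  · exact c.hG.comm g h (t * t) c.a_mem
  · set y := g * t⁻¹ with hy
    have hg' : g = y * t := by rw [hy]; group
    have hcy : y * (t * t) = (t * t) * y := c.hG.comm y h (t * t) c.a_mem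
    calc g * (t * t) = y * (t * (t * t)) := by rw [hg']; group
    _ = y * ((t * t) * t) := by group
    _ = ((t * t) * y) * t := by rw [← hcy]; group
    _ = (t * t) * g := by rw [hg']; group

lemma Ctx.inv_nonA (c : Ctx A t S s) {u : G} (hu : u ∉ A) : u⁻¹ = (t * t) * u := by
  have h := c.sq_nonA hu
  have : u⁻¹ = (u * u)⁻¹ * u := by group
  rw [this, h, c.a_inv]



/-! ### S, T, H facts -/

lemma Ctx.s_ne_one (c : Ctx A t S s) : s ≠ 1 := by
  rintro rfl; exact c.hS1 c.hsS

lemma Ctx.sinv_S (c : Ctx A t S s) : s⁻¹ ∈ S := c.hSinv _ c.hsS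

lemma Ctx.memH (c : Ctx A t S s) {x : G} (hx : x ∈ S \ {s, s⁻¹}) :
    x ∈ Subgroup.closure (S \ {s, s⁻¹}) := Subgroup.subset_closure hx

lemma Ctx.s_not_H (c : Ctx A t S s) : s ∉ Subgroup.closure (S \ {s, s⁻¹}) := by
  intro hs
  apply c.hH
  rw [eq_top_iff, ← c.hSgen]
  apply Subgroup.closure_le _ |>.mpr
  intro x hx
  by_cases h1 : x = s
  · subst h1; exact hs
  by_cases h2 : x = s⁻¹
  · subst h2; exact (Subgroup.closure _).inv_mem hs
  · exact Subgroup.subset_closure ⟨hx, by simp [h1, h2]⟩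

lemma Ctx.sinv_not_H (c : Ctx A t S s) : s⁻¹ ∉ Subgroup.closure (S \ {s, s⁻¹}) := by
  intro h
  exact c.s_not_H (by simpa using (Subgroup.closure (S \ {s, s⁻¹})).inv_mem h)

lemma Ctx.S_elim (c : Ctx A t S s) {x : G} (hx : x ∈ S) :
    x ∈ S \ {s, s⁻¹} ∨ x = s ∨ x = s⁻¹ := by
  by_cases h1 : x = s
  · exact Or.inr (Or.inl h1)
  by_cases h2 : x = s⁻¹
  · exact Or.inr (Or.inr h2)
  · exact Or.inl ⟨hx, by simp [h1, h2]⟩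

lemma Ctx.S_elim' (c : Ctx A t S s) {x : G} (hx : x ∈ S) :
    x ∈ S \ {s, s⁻¹} ∨ s = x ∨ s⁻¹ = x := by
  rcases c.S_elim hx with h | h | h
  · exact Or.inl h
  · exact Or.inr (Or.inl h.symm)
  · exact Or.inr (Or.inr h.symm)

lemma Ctx.T_ne_s {c : Ctx A t S s} {x : G} (hx : x ∈ S \ {s, s⁻¹}) : x ≠ s := by
  intro h; exact hx.2 (by simp [h])

lemma Ctx.T_ne_sinv {c : Ctx A t S s} {x : G} (hx : x ∈ S \ {s, s⁻¹}) : x ≠ s⁻¹ := by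
  intro h; exact hx.2 (by simp [h])

lemma Ctx.T_ne_one (c : Ctx A t S s) {x : G} (hx : x ∈ S \ {s, s⁻¹}) : x ≠ 1 := by
  rintro rfl; exact c.hS1 hx.1

lemma Ctx.T_inv (c : Ctx A t S s) {x : G} (hx : x ∈ S \ {s, s⁻¹}) :
    x⁻¹ ∈ S \ {s, s⁻¹} := by
  refine ⟨c.hSinv _ hx.1, ?_⟩
  intro h
  rcases h with h | h
  · exact c.T_ne_sinv hx (by rw [← inv_inv x, h])
  · exact c.T_ne_s hx (by rw [← inv_inv x, Set.mem_singleton_iff.mp h, inv_inv])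

lemma Ctx.exists_h0 (c : Ctx A t S s) : ∃ h₀, h₀ ∈ S \ {s, s⁻¹} ∧ h₀ ∉ A := by
  by_contra hcon
  push_neg at hcon
  have hSA : S ⊆ (A : Set G) := by
    intro x hx
    rcases c.S_elim hx with h | h | h
    · exact hcon x h
    · subst h; exact c.hsA
    · subst h; exact A.inv_mem c.hsA
  have : (⊤ : Subgroup G) ≤ A := by
    rw [← c.hSgen]
    exact Subgroup.closure_le _ |>.mpr hSA
  exact c.t_not_A (this trivial)

/-! ### graph facts -/

lemma Ctx.adj_iff (c : Ctx A t S s) {u v : G} :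
    (cayleyGraph G S).Adj u v ↔ u⁻¹ * v ∈ S := by
  change (u ≠ v ∧ (v⁻¹ * u ∈ S ∨ u⁻¹ * v ∈ S)) ↔ u⁻¹ * v ∈ S
  constructor
  · rintro ⟨hne, h | h⟩
    · have := c.hSinv _ h
      rwa [show (v⁻¹ * u)⁻¹ = u⁻¹ * v from by group] at this
    · exact h
  · intro h
    refine ⟨?_, Or.inr h⟩
    rintro rfl
    exact c.hS1 (by simpa using h)

lemma Ctx.mem_common (c : Ctx A t S s) {u v w : G} :
    w ∈ (cayleyGraph G S).neighborSet u ∩ (cayleyGraph G S).neighborSet v ↔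
      u⁻¹ * w ∈ S ∧ v⁻¹ * w ∈ S := by
  simp [SimpleGraph.mem_neighborSet, c.adj_iff]

lemma Ctx.dist_two (c : Ctx A t S s) {u v w : G} (hne : u ≠ v)
    (hnadj : u⁻¹ * v ∉ S) (h1 : u⁻¹ * w ∈ S) (h2 : w⁻¹ * v ∈ S) :
    (cayleyGraph G S).dist u v = 2 := by
  have a1 : (cayleyGraph G S).Adj u w := c.adj_iff.mpr h1
  have a2 : (cayleyGraph G S).Adj w v := c.adj_iff.mpr h2
  have hle : (cayleyGraph G S).dist u v ≤ 2 := by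
    have := SimpleGraph.dist_le (SimpleGraph.Walk.cons a1 (SimpleGraph.Walk.cons a2 SimpleGraph.Walk.nil))
    simpa using this
  have hr : (cayleyGraph G S).Reachable u v :=
    ⟨SimpleGraph.Walk.cons a1 (SimpleGraph.Walk.cons a2 SimpleGraph.Walk.nil)⟩
  have h0 : (cayleyGraph G S).dist u v ≠ 0 := fun h => hne (hr.dist_eq_zero_iff.mp h)
  have hne1 : (cayleyGraph G S).dist u v ≠ 1 := fun h =>
    hnadj (c.adj_iff.mp (SimpleGraph.dist_eq_one_iff_adj.mp h))
  omega



/-! ### common-neighbour computations -/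

lemma Ctx.commonA_mem (c : Ctx A t S s) (h2 : s * s ∈ S) :
    (cayleyGraph G S).neighborSet 1 ∩ (cayleyGraph G S).neighborSet s = {s⁻¹, s * s} := by
  ext w
  rw [c.mem_common]
  simp only [inv_one, one_mul, Set.mem_insert_iff, Set.mem_singleton_iff]
  constructor
  · rintro ⟨hw, hsw⟩
    rcases c.S_elim' hw with hT | rfl | rfl
    · rcases c.S_elim hsw with hT2 | he | he
      · exfalso
        apply c.s_not_H
        have hm := mul_mem (c.memH hT) (inv_mem (c.memH hT2))
        rwa [show w * (s⁻¹ * w)⁻¹ = s from by group] at hm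
      · right
        have h' : s * (s⁻¹ * w) = s * s := by rw [he]
        rwa [show s * (s⁻¹ * w) = w from by group] at h'
      · exfalso
        have h' : s * (s⁻¹ * w) = s * s⁻¹ := by rw [he]
        rw [show s * (s⁻¹ * w) = w from by group, show s * s⁻¹ = (1 : G) from by group] at h'
        exact c.hS1 (h' ▸ hw)
    · exfalso
      rw [show s⁻¹ * s = (1 : G) from by group] at hsw
      exact c.hS1 hsw
    · left; rfl
  · rintro (rfl | rfl)
    · exact ⟨c.sinv_S, by rw [show s⁻¹ * s⁻¹ = (s * s)⁻¹ from by group]; exact c.hSinv _ h2⟩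
    · exact ⟨h2, by rw [show s⁻¹ * (s * s) = s from by group]; exact c.hsS⟩

lemma Ctx.commonA_empty (c : Ctx A t S s) (h2 : s * s ∉ S) :
    (cayleyGraph G S).neighborSet 1 ∩ (cayleyGraph G S).neighborSet s = ∅ := by
  ext w
  rw [c.mem_common]
  simp only [inv_one, one_mul, Set.mem_empty_iff_false, iff_false, not_and]
  intro hw hsw
  rcases c.S_elim' hw with hT | rfl | rfl
  · rcases c.S_elim hsw with hT2 | he | he
    · apply c.s_not_H
      have hm := mul_mem (c.memH hT) (inv_mem (c.memH hT2))
      rwa [show w * (s⁻¹ * w)⁻¹ = s from by group] at hm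
    · apply h2
      have h' : s * (s⁻¹ * w) = s * s := by rw [he]
      rw [show s * (s⁻¹ * w) = w from by group] at h'
      exact h' ▸ hw
    · have h' : s * (s⁻¹ * w) = s * s⁻¹ := by rw [he]
      rw [show s * (s⁻¹ * w) = w from by group, show s * s⁻¹ = (1 : G) from by group] at h'
      exact c.hS1 (h' ▸ hw)
  · rw [show s⁻¹ * s = (1 : G) from by group] at hsw
    exact c.hS1 hsw
  · apply h2
    have := c.hSinv _ hsw
    rwa [show (s⁻¹ * s⁻¹)⁻¹ = s * s from by rw [mul_inv_rev, inv_inv]] at this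

lemma Ctx.commonB (c : Ctx A t S s) (h3 : s * s * s = 1) {h : G} (hh : h ∈ S \ {s, s⁻¹}) :
    (cayleyGraph G S).neighborSet 1 ∩ (cayleyGraph G S).neighborSet h =
      {g | g ∈ S \ {s, s⁻¹} ∧ h⁻¹ * g ∈ S \ {s, s⁻¹}} := by
  have hss : s * s = s⁻¹ := eq_inv_of_mul_eq_one_left h3
  ext w
  rw [c.mem_common]
  simp only [inv_one, one_mul, Set.mem_setOf_eq]
  constructor
  · rintro ⟨hw, hhw⟩
    rcases c.S_elim' hw with hT | rfl | rfl
    · rcases c.S_elim hhw with hT2 | he | he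
      · exact ⟨hT, hT2⟩
      · exfalso
        have hmem := mul_mem (inv_mem (c.memH hh)) (c.memH hT)
        exact c.s_not_H (he ▸ hmem)
      · exfalso
        have hmem := mul_mem (inv_mem (c.memH hh)) (c.memH hT)
        exact c.sinv_not_H (he ▸ hmem)
    · exfalso
      rcases c.S_elim hhw with hT2 | he | he
      · apply c.s_not_H
        have hmem := mul_mem (c.memH hh) (c.memH hT2)
        rwa [show h * (h⁻¹ * s) = s from by group] at hmem
      · apply c.T_ne_one hh
        have h' : (h⁻¹ * s) * s⁻¹ = s * s⁻¹ := by rw [he]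
        rw [show (h⁻¹ * s) * s⁻¹ = h⁻¹ from by group,
          show s * s⁻¹ = (1 : G) from by group] at h'
        rw [← inv_inv h, h', inv_one]
      · apply c.T_ne_sinv hh
        have h' : (h⁻¹ * s) * s⁻¹ = s⁻¹ * s⁻¹ := by rw [he]
        rw [show (h⁻¹ * s) * s⁻¹ = h⁻¹ from by group] at h'
        have h'' := congrArg (fun z => z⁻¹) h'
        rw [inv_inv, show (s⁻¹ * s⁻¹)⁻¹ = s * s from by rw [mul_inv_rev, inv_inv], hss] at h''
        exact h''
    · exfalso
      rcases c.S_elim hhw with hT2 | he | he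
      · apply c.sinv_not_H
        have hmem := mul_mem (c.memH hh) (c.memH hT2)
        rwa [show h * (h⁻¹ * s⁻¹) = s⁻¹ from by group] at hmem
      · apply c.T_ne_s hh
        have h' : (h⁻¹ * s⁻¹) * s = s * s := by rw [he]
        rw [show (h⁻¹ * s⁻¹) * s = h⁻¹ from by group, hss] at h'
        rw [← inv_inv h, h', inv_inv]
      · apply c.T_ne_one hh
        have h' : (h⁻¹ * s⁻¹) * s = s⁻¹ * s := by rw [he]
        rw [show (h⁻¹ * s⁻¹) * s = h⁻¹ from by group,
          show s⁻¹ * s = (1 : G) from by group] at h'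
        rw [← inv_inv h, h', inv_one]
  · rintro ⟨hwT, hprod⟩
    exact ⟨hwT.1, hprod.1⟩

lemma Ctx.commonC_dist (c : Ctx A t S s) {h₀ : G} (hh₀ : h₀ ∈ S \ {s, s⁻¹}) (hA : h₀ ∉ A) :
    (cayleyGraph G S).dist 1 (h₀ * s) = 2 := by
  apply c.dist_two (w := h₀)
  · intro h
    apply hA
    have : h₀ = s⁻¹ := eq_inv_of_mul_eq_one_left h.symm
    rw [this]; exact A.inv_mem c.hsA
  · rw [inv_one, one_mul]
    intro hin
    rcases c.S_elim hin with hT | he | he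
    · apply c.s_not_H
      have hmem := mul_mem (inv_mem (c.memH hh₀)) (c.memH hT)
      rwa [show h₀⁻¹ * (h₀ * s) = s from by group] at hmem
    · apply c.T_ne_one hh₀
      have h' : (h₀ * s) * s⁻¹ = s * s⁻¹ := by rw [he]
      rwa [show (h₀ * s) * s⁻¹ = h₀ from by group,
        show s * s⁻¹ = (1 : G) from by group] at h'
    · apply hA
      have h' : (h₀ * s) * s⁻¹ = s⁻¹ * s⁻¹ := by rw [he]
      rw [show (h₀ * s) * s⁻¹ = h₀ from by group] at h'
      rw [h']
      exact A.mul_mem (A.inv_mem c.hsA) (A.inv_mem c.hsA)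
  · rw [inv_one, one_mul]; exact hh₀.1
  · rw [show h₀⁻¹ * (h₀ * s) = s from by group]; exact c.hsS

lemma Ctx.hinvA (c : Ctx A t S s) {h₀ : G} (hA : h₀ ∉ A) : h₀⁻¹ ∉ A := by
  intro hmem
  apply hA
  rw [← inv_inv h₀]
  exact A.inv_mem hmem

lemma Ctx.commonC_val_s (c : Ctx A t S s) {h₀ : G} (hA : h₀ ∉ A) :
    (h₀ * s)⁻¹ * s = (h₀ * (s * s))⁻¹ := by
  rw [show (h₀ * s)⁻¹ * s = s⁻¹ * (h₀⁻¹ * s) from by group, c.mul_nonA (c.hinvA hA) c.hsA]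
  group

lemma Ctx.commonC_val_sinv (c : Ctx A t S s) {h₀ : G} (hA : h₀ ∉ A) :
    (h₀ * s)⁻¹ * s⁻¹ = h₀⁻¹ := by
  rw [show (h₀ * s)⁻¹ * s⁻¹ = s⁻¹ * (h₀⁻¹ * s⁻¹) from by group,
    c.mul_nonA (c.hinvA hA) (A.inv_mem c.hsA)]
  group

lemma Ctx.commonC_in (c : Ctx A t S s) {h₀ : G} (hh₀ : h₀ ∈ S \ {s, s⁻¹}) (hA : h₀ ∉ A)
    (hx : h₀ * (s * s) ∈ S) :
    (cayleyGraph G S).neighborSet 1 ∩ (cayleyGraph G S).neighborSet (h₀ * s) =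
      {h₀, s⁻¹, h₀ * (s * s), s} := by
  ext w
  rw [c.mem_common]
  simp only [inv_one, one_mul, Set.mem_insert_iff, Set.mem_singleton_iff]
  constructor
  · rintro ⟨hw, hsw⟩
    rcases c.S_elim' hw with hT | rfl | rfl
    · rw [show (h₀ * s)⁻¹ * w = s⁻¹ * (h₀⁻¹ * w) from by group] at hsw
      rcases c.S_elim hsw with hT2 | he | he
      · exfalso
        apply c.sinv_not_H
        have hm1 : h₀⁻¹ * w ∈ Subgroup.closure (S \ {s, s⁻¹}) :=
          mul_mem (inv_mem (c.memH hh₀)) (c.memH hT)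
        have hmem := mul_mem (c.memH hT2) (inv_mem hm1)
        rwa [show (s⁻¹ * (h₀⁻¹ * w)) * (h₀⁻¹ * w)⁻¹ = s⁻¹ from by group] at hmem
      · right; right; left
        have h' : (h₀ * s) * (s⁻¹ * (h₀⁻¹ * w)) = (h₀ * s) * s := by rw [he]
        rwa [show (h₀ * s) * (s⁻¹ * (h₀⁻¹ * w)) = w from by group,
          show (h₀ * s) * s = h₀ * (s * s) from by group] at h'
      · left
        have h' : (h₀ * s) * (s⁻¹ * (h₀⁻¹ * w)) = (h₀ * s) * s⁻¹ := by rw [he]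
        rwa [show (h₀ * s) * (s⁻¹ * (h₀⁻¹ * w)) = w from by group,
          show (h₀ * s) * s⁻¹ = h₀ from by group] at h'
    · right; right; right; rfl
    · right; left; rfl
  · rintro hx2
    rcases hx2 with he | he | he | he <;> rw [he]
    · exact ⟨hh₀.1, by rw [show (h₀ * s)⁻¹ * h₀ = s⁻¹ * (h₀⁻¹ * h₀) from by group,
        show s⁻¹ * (h₀⁻¹ * h₀) = s⁻¹ from by group]; exact c.sinv_S⟩
    · exact ⟨c.sinv_S, by rw [c.commonC_val_sinv hA]; exact c.hSinv _ hh₀.1⟩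
    · exact ⟨hx, by rw [show (h₀ * s)⁻¹ * (h₀ * (s * s)) = s from by group]; exact c.hsS⟩
    · exact ⟨c.hsS, by rw [c.commonC_val_s hA]; exact c.hSinv _ hx⟩

lemma Ctx.commonC_out (c : Ctx A t S s) {h₀ : G} (hh₀ : h₀ ∈ S \ {s, s⁻¹}) (hA : h₀ ∉ A)
    (hx : h₀ * (s * s) ∉ S) :
    (cayleyGraph G S).neighborSet 1 ∩ (cayleyGraph G S).neighborSet (h₀ * s) =
      {h₀, s⁻¹} := by
  ext w
  rw [c.mem_common]
  simp only [inv_one, one_mul, Set.mem_insert_iff, Set.mem_singleton_iff]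
  constructor
  · rintro ⟨hw, hsw⟩
    rcases c.S_elim' hw with hT | rfl | rfl
    · rw [show (h₀ * s)⁻¹ * w = s⁻¹ * (h₀⁻¹ * w) from by group] at hsw
      rcases c.S_elim hsw with hT2 | he | he
      · exfalso
        apply c.sinv_not_H
        have hm1 : h₀⁻¹ * w ∈ Subgroup.closure (S \ {s, s⁻¹}) :=
          mul_mem (inv_mem (c.memH hh₀)) (c.memH hT)
        have hmem := mul_mem (c.memH hT2) (inv_mem hm1)
        rwa [show (s⁻¹ * (h₀⁻¹ * w)) * (h₀⁻¹ * w)⁻¹ = s⁻¹ from by group] at hmem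
      · exfalso
        apply hx
        have h' : (h₀ * s) * (s⁻¹ * (h₀⁻¹ * w)) = (h₀ * s) * s := by rw [he]
        rw [show (h₀ * s) * (s⁻¹ * (h₀⁻¹ * w)) = w from by group,
          show (h₀ * s) * s = h₀ * (s * s) from by group] at h'
        exact h' ▸ hw
      · left
        have h' : (h₀ * s) * (s⁻¹ * (h₀⁻¹ * w)) = (h₀ * s) * s⁻¹ := by rw [he]
        rwa [show (h₀ * s) * (s⁻¹ * (h₀⁻¹ * w)) = w from by group,
          show (h₀ * s) * s⁻¹ = h₀ from by group] at h'
    · exfalso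
      apply hx
      rw [c.commonC_val_s hA] at hsw
      have := c.hSinv _ hsw
      rwa [inv_inv] at this
    · right; rfl
  · rintro hx2
    rcases hx2 with he | he <;> rw [he]
    · exact ⟨hh₀.1, by rw [show (h₀ * s)⁻¹ * h₀ = s⁻¹ * (h₀⁻¹ * h₀) from by group,
        show s⁻¹ * (h₀⁻¹ * h₀) = s⁻¹ from by group]; exact c.sinv_S⟩
    · exact ⟨c.sinv_S, by rw [c.commonC_val_sinv hA]; exact c.hSinv _ hh₀.1⟩



/-! ### the involution t*t : lemmas for the m = 3 case -/

lemma Ctx.a_mul_h (c : Ctx A t S s) {h₀ : G} (hA : h₀ ∉ A) : (t * t) * h₀ = h₀⁻¹ :=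
  (c.inv_nonA hA).symm

lemma Ctx.a_mul_hinv (c : Ctx A t S s) {h₀ : G} (hA : h₀ ∉ A) : (t * t) * h₀⁻¹ = h₀ := by
  have := c.inv_nonA (c.hinvA hA)
  rw [inv_inv] at this
  exact this.symm

lemma Ctx.m3_s_sq_inv (c : Ctx A t S s) (h3 : s * s * s = 1) : s⁻¹ * s⁻¹ = s := by
  have hss : s * s = s⁻¹ := eq_inv_of_mul_eq_one_left h3
  have := congrArg (fun z => z⁻¹) hss
  rw [mul_inv_rev, inv_inv] at this
  exact this

lemma Ctx.m3_a_ne_s (c : Ctx A t S s) (h3 : s * s * s = 1) : t * t ≠ s := by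
  intro htt
  apply c.s_ne_one
  have h1 : s * s = 1 := by rw [← htt]; exact c.a_sq
  have hss : s * s = s⁻¹ := eq_inv_of_mul_eq_one_left h3
  rw [hss] at h1
  exact inv_eq_one.mp h1

lemma Ctx.m3_a_ne_sinv (c : Ctx A t S s) (h3 : s * s * s = 1) : t * t ≠ s⁻¹ := by
  intro htt
  apply c.s_ne_one
  have h1 : s⁻¹ * s⁻¹ = 1 := by rw [← htt]; exact c.a_sq
  rw [c.m3_s_sq_inv h3] at h1
  exact h1

lemma Ctx.m3_a_not_S (c : Ctx A t S s) (h3 : s * s * s = 1)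
    (haT : t * t ∉ S \ {s, s⁻¹}) : t * t ∉ S := by
  intro hin
  rcases c.S_elim hin with hT | he | he
  · exact haT hT
  · exact c.m3_a_ne_s h3 he
  · exact c.m3_a_ne_sinv h3 he

lemma Ctx.commonD_dist (c : Ctx A t S s) (h3 : s * s * s = 1)
    (haT : t * t ∉ S \ {s, s⁻¹}) {h₀ : G} (hh₀ : h₀ ∈ S \ {s, s⁻¹}) (hA : h₀ ∉ A) :
    (cayleyGraph G S).dist 1 (t * t) = 2 := by
  apply c.dist_two (w := h₀)
  · exact fun h => c.a_ne_one h.symm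
  · rw [inv_one, one_mul]
    exact c.m3_a_not_S h3 haT
  · rw [inv_one, one_mul]; exact hh₀.1
  · have hval : h₀⁻¹ * (t * t) = h₀ := by
      calc h₀⁻¹ * (t * t) = (t * t) * h₀ * (t * t) := by rw [c.inv_nonA hA]
      _ = (t * t) * ((t * t) * h₀) := by rw [mul_assoc, c.a_comm h₀]
      _ = ((t * t) * (t * t)) * h₀ := by group
      _ = h₀ := by rw [c.a_sq, one_mul]
    rw [hval]; exact hh₀.1

lemma Ctx.commonD_set (c : Ctx A t S s) (h3 : s * s * s = 1)
    (haT : t * t ∉ S \ {s, s⁻¹}) {h₀ : G} (hh₀ : h₀ ∈ S \ {s, s⁻¹}) (hA : h₀ ∉ A) :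
    (cayleyGraph G S).neighborSet 1 ∩ (cayleyGraph G S).neighborSet (t * t) =
      {w | w ∈ S \ {s, s⁻¹} ∧ (t * t) * w ∈ S \ {s, s⁻¹}} := by
  have haH : t * t ∈ Subgroup.closure (S \ {s, s⁻¹}) := by
    rw [← c.sq_nonA hA]
    exact mul_mem (c.memH hh₀) (c.memH hh₀)
  ext w
  rw [c.mem_common]
  simp only [inv_one, one_mul, Set.mem_setOf_eq]
  rw [show (t * t)⁻¹ * w = (t * t) * w from by rw [c.a_inv]]
  constructor
  · rintro ⟨hw, hsw⟩
    rcases c.S_elim' hw with hT | rfl | rfl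
    · rcases c.S_elim hsw with hT2 | he | he
      · exact ⟨hT, hT2⟩
      · exfalso
        have hmem := mul_mem haH (c.memH hT)
        exact c.s_not_H (he ▸ hmem)
      · exfalso
        have hmem := mul_mem haH (c.memH hT)
        exact c.sinv_not_H (he ▸ hmem)
    · exfalso
      rcases c.S_elim hsw with hT2 | he | he
      · apply c.s_not_H
        have hmem := mul_mem haH (c.memH hT2)
        rwa [show (t * t) * ((t * t) * s) = ((t * t) * (t * t)) * s from by group,
          c.a_sq, one_mul] at hmem
      · -- (t*t)*s = s  ⟹  t*t = 1
        apply c.a_ne_one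
        have h' : ((t * t) * s) * s⁻¹ = s * s⁻¹ := by rw [he]
        rwa [show ((t * t) * s) * s⁻¹ = t * t from by group,
          show s * s⁻¹ = (1 : G) from by group] at h'
      · -- (t*t)*s = s⁻¹  ⟹  t*t = s⁻¹*s⁻¹ = s
        apply c.m3_a_ne_s h3
        have h' : ((t * t) * s) * s⁻¹ = s⁻¹ * s⁻¹ := by rw [he]
        rwa [show ((t * t) * s) * s⁻¹ = t * t from by group, c.m3_s_sq_inv h3] at h'
    · exfalso
      rcases c.S_elim hsw with hT2 | he | he
      · apply c.sinv_not_H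
        have hmem := mul_mem haH (c.memH hT2)
        rwa [show (t * t) * ((t * t) * s⁻¹) = ((t * t) * (t * t)) * s⁻¹ from by group,
          c.a_sq, one_mul] at hmem
      · -- (t*t)*s⁻¹ = s ⟹ t*t = s*s = s⁻¹
        apply c.m3_a_ne_sinv h3
        have hss : s * s = s⁻¹ := eq_inv_of_mul_eq_one_left h3
        have h' : ((t * t) * s⁻¹) * s = s * s := by rw [he]
        rwa [show ((t * t) * s⁻¹) * s = t * t from by group, hss] at h'
      · apply c.a_ne_one
        have h' : ((t * t) * s⁻¹) * s = s⁻¹ * s := by rw [he]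
        rwa [show ((t * t) * s⁻¹) * s = t * t from by group,
          show s⁻¹ * s = (1 : G) from by group] at h'
  · rintro ⟨hwT, hprod⟩
    exact ⟨hwT.1, hprod.1⟩

/-! ### Lemma X configuration -/

lemma Ctx.commonE (c : Ctx A t S s) (hq : s * s ≠ 1) {w : G} (hw : w ∈ S \ {s, s⁻¹})
    (hw2 : s⁻¹ * (s⁻¹ * w) ∈ S \ {s, s⁻¹}) (hwne : w ≠ s * s) :
    (cayleyGraph G S).dist 1 (s⁻¹ * w) = 2 ∧
      {s, s⁻¹, w, s⁻¹ * (s⁻¹ * w)} ⊆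
        (cayleyGraph G S).neighborSet 1 ∩ (cayleyGraph G S).neighborSet (s⁻¹ * w) := by
  constructor
  · apply c.dist_two (w := s⁻¹)
    · intro h
      apply c.T_ne_s hw
      have h' : s * (1 : G) = s * (s⁻¹ * w) := by rw [h]
      rw [mul_one, show s * (s⁻¹ * w) = w from by group] at h'
      exact h'.symm
    · rw [inv_one, one_mul]
      intro hin
      rcases c.S_elim hin with hT | he | he
      · apply c.sinv_not_H
        have hmem := mul_mem (c.memH hT) (inv_mem (c.memH hw))
        rwa [show (s⁻¹ * w) * w⁻¹ = s⁻¹ from by group] at hmem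
      · apply hwne
        have h' : s * (s⁻¹ * w) = s * s := by rw [he]
        rwa [show s * (s⁻¹ * w) = w from by group] at h'
      · apply c.T_ne_one hw
        have h' : s * (s⁻¹ * w) = s * s⁻¹ := by rw [he]
        rwa [show s * (s⁻¹ * w) = w from by group,
          show s * s⁻¹ = (1 : G) from by group] at h'
    · rw [inv_one, one_mul]; exact c.sinv_S
    · rw [show (s⁻¹)⁻¹ * (s⁻¹ * w) = w from by group]; exact hw.1
  · intro x hx
    rw [c.mem_common]
    simp only [inv_one, one_mul]
    simp only [Set.mem_insert_iff, Set.mem_singleton_iff] at hx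
    rcases hx with he | he | he | he <;> rw [he]
    · refine ⟨c.hsS, ?_⟩
      rw [show (s⁻¹ * w)⁻¹ * s = (s⁻¹ * (s⁻¹ * w))⁻¹ from by simp [mul_inv_rev, mul_assoc]]
      exact c.hSinv _ hw2.1
    · refine ⟨c.sinv_S, ?_⟩
      rw [show (s⁻¹ * w)⁻¹ * s⁻¹ = w⁻¹ from by group]
      exact c.hSinv _ hw.1
    · refine ⟨hw.1, ?_⟩
      rw [show (s⁻¹ * w)⁻¹ * w = w⁻¹ * (s * w) from by group]
      rcases c.conj_cases c.hsA w with h | h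
      · rw [h]; exact c.hsS
      · rw [h]; exact c.sinv_S
    · refine ⟨hw2.1, ?_⟩
      rw [show (s⁻¹ * w)⁻¹ * (s⁻¹ * (s⁻¹ * w)) = w⁻¹ * (s⁻¹ * w) from by group]
      rcases c.conj_cases (A.inv_mem c.hsA) w with h | h
      · rw [h]; exact c.sinv_S
      · rw [h, inv_inv]; exact c.hsS

/-! ### the edge (1, s²) when s² ∈ S -/

lemma Ctx.commonF (c : Ctx A t S s) (h2 : s * s ∈ S) (h3 : s * s * s ≠ 1)
    (h4 : s * s * s * s ≠ 1) :
    (cayleyGraph G S).neighborSet 1 ∩ (cayleyGraph G S).neighborSet (s * s) =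
      {s} ∪ {w | w ∈ S \ {s, s⁻¹} ∧ s⁻¹ * (s⁻¹ * w) ∈ S \ {s, s⁻¹}} := by
  have hs2T : s * s ∈ S \ {s, s⁻¹} := by
    rcases c.S_elim h2 with h | he | he
    · exact h
    · exfalso
      apply c.s_ne_one
      have h' : s⁻¹ * (s * s) = s⁻¹ * s := by rw [he]
      rwa [show s⁻¹ * (s * s) = s from by group,
        show s⁻¹ * s = (1 : G) from by group] at h'
    · exfalso
      apply h3
      rw [show s * s * s = (s * s) * s from rfl, he]
      group
  ext w
  rw [c.mem_common]
  simp only [inv_one, one_mul, Set.mem_union, Set.mem_singleton_iff, Set.mem_setOf_eq]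
  constructor
  · rintro ⟨hw, hsw⟩
    rw [show (s * s)⁻¹ * w = s⁻¹ * (s⁻¹ * w) from by group] at hsw
    rcases c.S_elim' hw with hT | rfl | rfl
    · rcases c.S_elim hsw with hT2 | he | he
      · exact Or.inr ⟨hT, hT2⟩
      · exfalso
        apply c.s_not_H
        have hwv : w = s * (s * s) := by
          have h' : s * (s * (s⁻¹ * (s⁻¹ * w))) = s * (s * s) := by rw [he]
          rwa [show s * (s * (s⁻¹ * (s⁻¹ * w))) = w from by group] at h'
        have hmem := mul_mem (c.memH hT) (inv_mem (c.memH hs2T))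
        rw [hwv] at hmem
        rwa [show s * (s * s) * (s * s)⁻¹ = s from by group] at hmem
      · exfalso
        apply c.T_ne_s hT
        have h' : s * (s * (s⁻¹ * (s⁻¹ * w))) = s * (s * s⁻¹) := by rw [he]
        rwa [show s * (s * (s⁻¹ * (s⁻¹ * w))) = w from by group,
          show s * (s * s⁻¹) = s from by group] at h'
    · exact Or.inl rfl
    · exfalso
      rcases c.S_elim hsw with hT2 | he | he
      · apply c.sinv_not_H
        have hmem := mul_mem (c.memH hT2) (c.memH hs2T)
        rwa [show (s⁻¹ * (s⁻¹ * s⁻¹)) * (s * s) = s⁻¹ from by group] at hmem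
      · apply h4
        have h' := congrArg (fun z => (s * (s * s)) * z) he
        rw [show s * (s * s) * (s⁻¹ * (s⁻¹ * s⁻¹)) = (1 : G) from by group] at h'
        rw [show s * s * s * s = s * (s * s) * s from by group]
        exact h'.symm
      · have h' := congrArg (fun z => s * z) he
        rw [show s * (s⁻¹ * (s⁻¹ * s⁻¹)) = s⁻¹ * s⁻¹ from by group,
          show s * s⁻¹ = (1 : G) from by group] at h'
        have hss1 : s * s = 1 := by
          have h'' := congrArg (fun z => z⁻¹) h'
          rwa [show (s⁻¹ * s⁻¹)⁻¹ = s * s from by rw [mul_inv_rev, inv_inv], inv_one] at h''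
        exact c.hS1 (hss1 ▸ h2)
  · rintro (he | ⟨hT, hT2⟩)
    · rw [he]
      exact ⟨c.hsS, by rw [show (s * s)⁻¹ * s = s⁻¹ from by group]; exact c.sinv_S⟩
    · exact ⟨hT.1, by rw [show (s * s)⁻¹ * w = s⁻¹ * (s⁻¹ * w) from by group]; exact hT2.1⟩

/-! ### pair (s⁻¹, s) when s² ∉ S -/

lemma Ctx.commonG_dist (c : Ctx A t S s) (h2 : s * s ∉ S) (hq : s * s ≠ 1) :
    (cayleyGraph G S).dist s⁻¹ s = 2 := by
  apply c.dist_two (w := 1)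
  · intro h
    exact hq (mul_eq_one_iff_eq_inv.mpr h.symm)
  · rw [show (s⁻¹)⁻¹ * s = s * s from by group]
    exact h2
  · rw [show (s⁻¹)⁻¹ * 1 = s from by group]
    exact c.hsS
  · rw [show (1 : G)⁻¹ * s = s from by group]
    exact c.hsS

lemma Ctx.commonG_elts (c : Ctx A t S s) (h2 : s * s ∉ S) (hq : s * s ≠ 1)
    (h4 : s * s * s * s ≠ 1) :
    ∀ w ∈ (cayleyGraph G S).neighborSet s⁻¹ ∩ (cayleyGraph G S).neighborSet s,
      w = 1 ∨ (∃ y, y ∈ S \ {s, s⁻¹} ∧ s⁻¹ * (s⁻¹ * y) ∈ S \ {s, s⁻¹} ∧ y ≠ s * s) ∨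
        s * s * s ∈ S \ {s, s⁻¹} := by
  intro w hmem
  rw [c.mem_common] at hmem
  obtain ⟨hx1, hx2⟩ := hmem
  rw [show (s⁻¹)⁻¹ * w = s * w from by group] at hx1
  rcases c.S_elim hx2 with hT | he | he
  · rcases c.S_elim hx1 with hT2 | he2 | he2
    · right; left
      refine ⟨s * w, hT2, ?_, ?_⟩
      · rw [show s⁻¹ * (s⁻¹ * (s * w)) = s⁻¹ * w from by group]
        exact hT
      · intro h
        exact h2 (h ▸ hT2.1)
    · left
      have h' : s⁻¹ * (s * w) = s⁻¹ * s := by rw [he2]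
      rwa [show s⁻¹ * (s * w) = w from by group,
        show s⁻¹ * s = (1 : G) from by group] at h'
    · right; right
      have hwv : s⁻¹ * w = (s * (s * s))⁻¹ := by
        have h' : s⁻¹ * (s * w) = s⁻¹ * s⁻¹ := by rw [he2]
        rw [show s⁻¹ * (s * w) = w from by group] at h'
        rw [h']; group
      have hmem2 := c.T_inv (hwv ▸ hT)
      rw [inv_inv] at hmem2
      rwa [show s * s * s = s * (s * s) from by group]
  · -- s⁻¹ * w = s,  w = s * s
    have hwv : w = s * s := by
      have h' : s * (s⁻¹ * w) = s * s := by rw [he]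
      rwa [show s * (s⁻¹ * w) = w from by group] at h'
    rw [hwv, show s * (s * s) = s * s * s from by group] at hx1
    rcases c.S_elim hx1 with hT2 | he2 | he2
    · exact Or.inr (Or.inr hT2)
    · exfalso
      apply hq
      have h' : s⁻¹ * (s * s * s) = s⁻¹ * s := by rw [he2]
      rwa [show s⁻¹ * (s * s * s) = s * s from by group,
        show s⁻¹ * s = (1 : G) from by group] at h'
    · exfalso
      apply h4
      have h' := congrArg (fun z => z * s) he2
      rwa [show s⁻¹ * s = (1 : G) from by group] at h'
  · left
    have h' : s * (s⁻¹ * w) = s * s⁻¹ := by rw [he]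
    rwa [show s * (s⁻¹ * w) = w from by group,
      show s * s⁻¹ = (1 : G) from by group] at h'

/-! ### the configuration s³ ∈ T (with s² ∉ S) -/

lemma Ctx.commonH (c : Ctx A t S s) (h3T : s * s * s ∈ S \ {s, s⁻¹}) (h2 : s * s ∉ S)
    (hq : s * s ≠ 1) :
    (cayleyGraph G S).dist 1 (s * s) = 2 ∧
      {s, s⁻¹, s * s * s} ⊆
        (cayleyGraph G S).neighborSet 1 ∩ (cayleyGraph G S).neighborSet (s * s) := by
  constructor
  · apply c.dist_two (w := s)
    · exact fun h => hq h.symm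
    · rw [inv_one, one_mul]; exact h2
    · rw [inv_one, one_mul]; exact c.hsS
    · rw [show s⁻¹ * (s * s) = s from by group]; exact c.hsS
  · intro x hx
    rw [c.mem_common]
    simp only [inv_one, one_mul]
    simp only [Set.mem_insert_iff, Set.mem_singleton_iff] at hx
    rcases hx with he | he | he <;> rw [he]
    · exact ⟨c.hsS, by rw [show (s * s)⁻¹ * s = s⁻¹ from by group]; exact c.sinv_S⟩
    · refine ⟨c.sinv_S, ?_⟩
      rw [show (s * s)⁻¹ * s⁻¹ = (s * s * s)⁻¹ from by group]
      exact c.hSinv _ h3T.1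
    · exact ⟨h3T.1, by rw [show (s * s)⁻¹ * (s * s * s) = s from by group]; exact c.hsS⟩



end Claim2Aux

open Claim2Aux

/-- Claim 2.5: `a₁ ∈ {0, 2}` with `a₁ = 2` iff `s² ∈ S`; and `c₂ ∈ {2, 4}`,
with `c₂ = 4` whenever `o(s) ≥ 6`. -/
theorem claim2_a1_c2
    {G : Type*} [Group G] (A : Subgroup G) (t : G) (hG : IsGenDicyclic A t)
    (S : Set G) (hS1 : (1 : G) ∉ S) (hSinv : ∀ x ∈ S, x⁻¹ ∈ S)
    (hSgen : Subgroup.closure S = ⊤)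
    (s : G) (hsS : s ∈ S) (hsA : s ∈ A)
    (H : Subgroup G) (hHdef : H = Subgroup.closure (S \ {s, s⁻¹})) (hH : H ≠ ⊤)
    (hdrg : (cayleyGraph G S).IsDistRegular) :
    (∀ a1 : ℕ, (∀ u v : G, (cayleyGraph G S).Adj u v →
          ((cayleyGraph G S).neighborSet u ∩ (cayleyGraph G S).neighborSet v).ncard = a1) →
        (a1 = 0 ∨ a1 = 2) ∧ (a1 = 2 ↔ s ^ 2 ∈ S))
    ∧ (∀ c2 : ℕ, (∀ u v : G, (cayleyGraph G S).dist u v = 2 →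
          ((cayleyGraph G S).neighborSet u ∩ (cayleyGraph G S).neighborSet v).ncard = c2) →
        (c2 = 2 ∨ c2 = 4) ∧ (6 ≤ orderOf s → c2 = 4)) := by

  classical
  have c : Ctx A t S s := ⟨hG, hS1, hSinv, hSgen, hsS, hsA, hHdef ▸ hH⟩
  obtain ⟨h₀, hh₀, hA⟩ := c.exists_h0
  obtain ⟨Γconn, hpar⟩ := hdrg
  have hNset : ∀ u : G,
      {w | (cayleyGraph G S).dist u w = 1} = (cayleyGraph G S).neighborSet u := by
    intro u; ext w
    simp only [Set.mem_setOf_eq, SimpleGraph.mem_neighborSet]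
    exact SimpleGraph.dist_eq_one_iff_adj
  obtain ⟨c2x, a2x, b2x, h2x⟩ := hpar 2
  have hc2d : ∀ u v : G, (cayleyGraph G S).dist u v = 2 →
      ((cayleyGraph G S).neighborSet u ∩ (cayleyGraph G S).neighborSet v).ncard = c2x := by
    intro u v hd
    have h := (h2x u v hd).1
    rw [show (2 : ℕ) - 1 = 1 from rfl, hNset u, Set.inter_comm] at h
    exact h
  obtain ⟨c1x, a1x, b1x, h1x⟩ := hpar 1
  have ha1d : ∀ u v : G, (cayleyGraph G S).Adj u v →
      ((cayleyGraph G S).neighborSet u ∩ (cayleyGraph G S).neighborSet v).ncard = a1x := by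
    intro u v hadj
    have h := (h1x u v (SimpleGraph.dist_eq_one_iff_adj.mpr hadj)).2.1
    rw [hNset u, Set.inter_comm] at h
    exact h
  have hedge : (cayleyGraph G S).Adj 1 s := c.adj_iff.mpr (by simpa using c.hsS)
  constructor
  · -- Part (i): a₁
    intro a1 hA1
    by_cases h2S : s * s ∈ S
    · by_cases h3 : s * s * s = 1
      · -- the case o(s)=3 is impossible
        exfalso
        have hss : s * s = s⁻¹ := eq_inv_of_mul_eq_one_left h3
        have ha1 : a1 = 1 := by
          rw [← hA1 1 s hedge, c.commonA_mem h2S, hss, Set.pair_eq_singleton,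
            Set.ncard_singleton]
        have hxout : h₀ * (s * s) ∉ S := by
          rw [hss]
          intro hin
          rcases c.S_elim hin with hT | he | he
          · apply c.sinv_not_H
            have hmem := mul_mem (inv_mem (c.memH hh₀)) (c.memH hT)
            rwa [show h₀⁻¹ * (h₀ * s⁻¹) = s⁻¹ from by group] at hmem
          · apply hA
            have h' : (h₀ * s⁻¹) * s = s * s := by rw [he]
            rw [show (h₀ * s⁻¹) * s = h₀ from by group] at h'
            rw [h']
            exact A.mul_mem c.hsA c.hsA
          · apply c.T_ne_one hh₀
            have h' : (h₀ * s⁻¹) * s = s⁻¹ * s := by rw [he]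
            rwa [show (h₀ * s⁻¹) * s = h₀ from by group,
              show s⁻¹ * s = (1 : G) from by group] at h'
        have hc2 : c2x = 2 := by
          rw [← hc2d 1 (h₀ * s) (c.commonC_dist hh₀ hA),
            c.commonC_out hh₀ hA hxout, Set.ncard_pair (c.T_ne_sinv hh₀)]
        have hne01 : h₀ ≠ h₀⁻¹ := by
          intro h
          exact c.a_ne_one (by rw [← c.sq_nonA hA]; exact mul_eq_one_iff_eq_inv.mpr h)
        by_cases haT : t * t ∈ S \ {s, s⁻¹}
        · -- the involution is in T : degree ≥ 2 in the local graph
          have hadj2 : (cayleyGraph G S).Adj 1 (t * t) := c.adj_iff.mpr (by simpa using haT.1)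
          have hcard := hA1 1 (t * t) hadj2
          rw [c.commonB h3 haT] at hcard
          have hsub : {h₀, h₀⁻¹} ⊆
              {g | g ∈ S \ {s, s⁻¹} ∧ (t * t)⁻¹ * g ∈ S \ {s, s⁻¹}} := by
            intro x hx
            simp only [Set.mem_insert_iff, Set.mem_singleton_iff] at hx
            simp only [Set.mem_setOf_eq]
            rcases hx with he | he <;> rw [he]
            · exact ⟨hh₀, by rw [c.a_inv, c.a_mul_h hA]; exact c.T_inv hh₀⟩
            · exact ⟨c.T_inv hh₀, by rw [c.a_inv, c.a_mul_hinv hA]; exact hh₀⟩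
          have hfin : {g | g ∈ S \ {s, s⁻¹} ∧ (t * t)⁻¹ * g ∈ S \ {s, s⁻¹}}.Finite := by
            rcases Set.finite_or_infinite
              {g | g ∈ S \ {s, s⁻¹} ∧ (t * t)⁻¹ * g ∈ S \ {s, s⁻¹}} with hf | hf
            · exact hf
            · rw [hf.ncard] at hcard; omega
          have hle := Set.ncard_le_ncard hsub hfin
          rw [Set.ncard_pair hne01, hcard, ha1] at hle
          omega
        · -- the involution is not in T
          have hcardD := hc2d 1 (t * t) (c.commonD_dist h3 haT hh₀ hA)
          rw [c.commonD_set h3 haT hh₀ hA, hc2] at hcardD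
          have hsub : {h₀, h₀⁻¹} ⊆
              {w | w ∈ S \ {s, s⁻¹} ∧ (t * t) * w ∈ S \ {s, s⁻¹}} := by
            intro x hx
            simp only [Set.mem_insert_iff, Set.mem_singleton_iff] at hx
            simp only [Set.mem_setOf_eq]
            rcases hx with he | he <;> rw [he]
            · exact ⟨hh₀, by rw [c.a_mul_h hA]; exact c.T_inv hh₀⟩
            · exact ⟨c.T_inv hh₀, by rw [c.a_mul_hinv hA]; exact hh₀⟩
          have hfin : {w | w ∈ S \ {s, s⁻¹} ∧ (t * t) * w ∈ S \ {s, s⁻¹}}.Finite := by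
            rcases Set.finite_or_infinite
              {w | w ∈ S \ {s, s⁻¹} ∧ (t * t) * w ∈ S \ {s, s⁻¹}} with hf | hf
            · exact hf
            · rw [hf.ncard] at hcardD; omega
          have heq := Set.eq_of_subset_of_ncard_le hsub
            (by rw [hcardD, Set.ncard_pair hne01]) hfin
          have hTA : ∀ x, x ∈ S \ {s, s⁻¹} → x ∉ A → x = h₀ ∨ x = h₀⁻¹ := by
            intro x hx hxA
            have hxX : x ∈ {w | w ∈ S \ {s, s⁻¹} ∧ (t * t) * w ∈ S \ {s, s⁻¹}} := by
              refine ⟨hx, ?_⟩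
              rw [c.a_mul_h hxA]
              exact c.T_inv hx
            rw [← heq] at hxX
            simpa using hxX
          have hadj0 : (cayleyGraph G S).Adj 1 h₀ := c.adj_iff.mpr (by simpa using hh₀.1)
          have hcard0 := hA1 1 h₀ hadj0
          rw [c.commonB h3 hh₀] at hcard0
          have hempty : {g | g ∈ S \ {s, s⁻¹} ∧ h₀⁻¹ * g ∈ S \ {s, s⁻¹}} = ∅ := by
            ext g
            simp only [Set.mem_setOf_eq, Set.mem_empty_iff_false, iff_false, not_and]
            intro hgT hpT
            by_cases hgA : g ∈ A
            · have hpA : h₀⁻¹ * g ∉ A := by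
                intro hmem
                apply hA
                have hg2 := A.mul_mem hgA (A.inv_mem hmem)
                rwa [show g * (h₀⁻¹ * g)⁻¹ = h₀ from by group] at hg2
              rcases hTA _ hpT hpA with he | he
              · apply haT
                have h' : h₀ * (h₀⁻¹ * g) = h₀ * h₀ := by rw [he]
                rw [show h₀ * (h₀⁻¹ * g) = g from by group, c.sq_nonA hA] at h'
                exact h' ▸ hgT
              · apply c.T_ne_one hgT
                have h' : h₀ * (h₀⁻¹ * g) = h₀ * h₀⁻¹ := by rw [he]
                rwa [show h₀ * (h₀⁻¹ * g) = g from by group,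
                  show h₀ * h₀⁻¹ = (1 : G) from by group] at h'
            · rcases hTA g hgT hgA with he | he
              · rw [he] at hpT
                exact c.T_ne_one hpT (by group)
              · rw [he] at hpT
                apply haT
                have heq2 : h₀⁻¹ * h₀⁻¹ = t * t := by
                  rw [show h₀⁻¹ * h₀⁻¹ = (h₀ * h₀)⁻¹ from by rw [mul_inv_rev],
                    c.sq_nonA hA, c.a_inv]
                exact heq2 ▸ hpT
          rw [hempty, Set.ncard_empty] at hcard0
          omega
      · -- o(s) ≠ 3 : a₁ = 2
        have hne : s⁻¹ ≠ s * s := fun h => h3 (by rw [← h]; group)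
        have ha12 : a1 = 2 := by
          rw [← hA1 1 s hedge, c.commonA_mem h2S, Set.ncard_pair hne]
        exact ⟨Or.inr ha12, by rw [pow_two]; exact iff_of_true ha12 h2S⟩
    · have ha10 : a1 = 0 := by
        rw [← hA1 1 s hedge, c.commonA_empty h2S, Set.ncard_empty]
      refine ⟨Or.inl ha10, ?_⟩
      rw [pow_two]
      exact iff_of_false (by omega) h2S
  · -- Part (ii): c₂
    intro c2 hC2
    by_cases hq : s * s = 1
    · have hsinv : s⁻¹ = s := by rw [inv_eq_iff_mul_eq_one]; exact hq
      have hx : h₀ * (s * s) ∈ S := by rw [hq, mul_one]; exact hh₀.1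
      have hc2v : c2 = 2 := by
        rw [← hC2 1 (h₀ * s) (c.commonC_dist hh₀ hA), c.commonC_in hh₀ hA hx,
          hq, mul_one, hsinv,
          show ({h₀, s, h₀, s} : Set G) = {h₀, s} from by
            ext x; simp only [Set.mem_insert_iff, Set.mem_singleton_iff]; tauto]
        exact Set.ncard_pair (c.T_ne_s hh₀)
      refine ⟨Or.inl hc2v, fun h6 => ?_⟩
      exfalso
      have hpow : s ^ 2 = 1 := by rw [pow_two]; exact hq
      have := orderOf_le_of_pow_eq_one (by norm_num : (0:ℕ) < 2) hpow
      omega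
    · by_cases hx : h₀ * (s * s) ∈ S
      · -- c₂ = 4
        have hxT : h₀ * (s * s) ∈ S \ {s, s⁻¹} := by
          rcases c.S_elim hx with h | he | he
          · exact h
          · exfalso; apply hA
            have h' : (h₀ * (s * s)) * (s * s)⁻¹ = s * (s * s)⁻¹ := by rw [he]
            rw [show (h₀ * (s * s)) * (s * s)⁻¹ = h₀ from by group] at h'
            rw [h']
            exact A.mul_mem c.hsA (A.inv_mem (A.mul_mem c.hsA c.hsA))
          · exfalso; apply hA
            have h' : (h₀ * (s * s)) * (s * s)⁻¹ = s⁻¹ * (s * s)⁻¹ := by rw [he]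
            rw [show (h₀ * (s * s)) * (s * s)⁻¹ = h₀ from by group] at h'
            rw [h']
            exact A.mul_mem (A.inv_mem c.hsA) (A.inv_mem (A.mul_mem c.hsA c.hsA))
        have hd1 : h₀ ≠ s⁻¹ := c.T_ne_sinv hh₀
        have hd2 : h₀ ≠ h₀ * (s * s) := by
          intro h
          apply hq
          have h' := congrArg (fun z => h₀⁻¹ * z) h
          rw [show h₀⁻¹ * h₀ = (1 : G) from by group,
            show h₀⁻¹ * (h₀ * (s * s)) = s * s from by group] at h'
          exact h'.symm
        have hd3 : h₀ ≠ s := c.T_ne_s hh₀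
        have hd4 : s⁻¹ ≠ h₀ * (s * s) := fun h => c.T_ne_sinv hxT h.symm
        have hd5 : s⁻¹ ≠ s := fun h => hq (mul_eq_one_iff_eq_inv.mpr h.symm)
        have hd6 : h₀ * (s * s) ≠ s := c.T_ne_s hxT
        have hc4 : c2 = 4 := by
          rw [← hC2 1 (h₀ * s) (c.commonC_dist hh₀ hA), c.commonC_in hh₀ hA hx,
            ncard4 hd1 hd2 hd3 hd4 hd5 hd6]
        exact ⟨Or.inr hc4, fun _ => hc4⟩
      · -- c₂ = 2; then o(s) ≥ 6 is impossible
        have hc2v : c2 = 2 := by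
          rw [← hC2 1 (h₀ * s) (c.commonC_dist hh₀ hA), c.commonC_out hh₀ hA hx,
            Set.ncard_pair (c.T_ne_sinv hh₀)]
        refine ⟨Or.inl hc2v, fun h6 => ?_⟩
        exfalso
        have p2 : s * s ≠ 1 := hq
        have p3 : s * s * s ≠ 1 := by
          intro h
          have hpow : s ^ 3 = 1 := by rw [pow_succ, pow_two]; exact h
          have := orderOf_le_of_pow_eq_one (by norm_num : (0:ℕ) < 3) hpow
          omega
        have p4 : s * s * s * s ≠ 1 := by
          intro h
          have hpow : s ^ 4 = 1 := by rw [pow_succ, pow_succ, pow_two]; exact h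
          have := orderOf_le_of_pow_eq_one (by norm_num : (0:ℕ) < 4) hpow
          omega
        have hd5 : s ≠ s⁻¹ := fun h => hq (mul_eq_one_iff_eq_inv.mpr h)
        have lemX : ∀ w, w ∈ S \ {s, s⁻¹} → s⁻¹ * (s⁻¹ * w) ∈ S \ {s, s⁻¹} →
            w ≠ s * s → False := by
          intro w hw hw2 hwne
          obtain ⟨hd, hsub⟩ := c.commonE p2 hw hw2 hwne
          have hcard := hC2 1 (s⁻¹ * w) hd
          rw [hc2v] at hcard
          have d2 : s ≠ w := fun h => c.T_ne_s hw h.symm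
          have d3 : s ≠ s⁻¹ * (s⁻¹ * w) := fun h => c.T_ne_s hw2 h.symm
          have d4 : s⁻¹ ≠ w := fun h => c.T_ne_sinv hw h.symm
          have d5 : s⁻¹ ≠ s⁻¹ * (s⁻¹ * w) := fun h => c.T_ne_sinv hw2 h.symm
          have d6 : w ≠ s⁻¹ * (s⁻¹ * w) := by
            intro h
            apply p2
            have h' : (s⁻¹ * (s⁻¹ * w)) * w⁻¹ = w * w⁻¹ := by rw [← h]
            rw [show (s⁻¹ * (s⁻¹ * w)) * w⁻¹ = s⁻¹ * s⁻¹ from by group,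
              show w * w⁻¹ = (1 : G) from by group] at h'
            have h'' := congrArg (fun z => z⁻¹) h'
            rwa [show (s⁻¹ * s⁻¹)⁻¹ = s * s from by rw [mul_inv_rev, inv_inv],
              inv_one] at h''
          have hfin : ((cayleyGraph G S).neighborSet 1 ∩
              (cayleyGraph G S).neighborSet (s⁻¹ * w)).Finite := by
            rcases Set.finite_or_infinite ((cayleyGraph G S).neighborSet 1 ∩
              (cayleyGraph G S).neighborSet (s⁻¹ * w)) with hf | hf
            · exact hf
            · rw [hf.ncard] at hcard; omega
          have hle := Set.ncard_le_ncard hsub hfin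
          rw [ncard4 hd5 d2 d3 d4 d5 d6, hcard] at hle
          omega
        by_cases h2S : s * s ∈ S
        · -- s² ∈ S : use a₁ = 2 at the edge (1, s²)
          have hne : s⁻¹ ≠ s * s := fun h => p3 (by rw [← h]; group)
          have ha12 : a1x = 2 := by
            rw [← ha1d 1 s hedge, c.commonA_mem h2S, Set.ncard_pair hne]
          have hadj2 : (cayleyGraph G S).Adj 1 (s * s) := c.adj_iff.mpr (by simpa using h2S)
          have hFcard := ha1d 1 (s * s) hadj2
          rw [c.commonF h2S p3 p4, ha12] at hFcard
          have hXne : {w | w ∈ S \ {s, s⁻¹} ∧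
              s⁻¹ * (s⁻¹ * w) ∈ S \ {s, s⁻¹}}.Nonempty := by
            by_contra hemp
            rw [Set.not_nonempty_iff_eq_empty] at hemp
            rw [hemp, Set.union_empty, Set.ncard_singleton] at hFcard
            omega
          obtain ⟨w, hwT, hw2⟩ := hXne
          apply lemX w hwT hw2
          intro h
          rw [h] at hw2
          rw [show s⁻¹ * (s⁻¹ * (s * s)) = (1 : G) from by group] at hw2
          exact c.hS1 hw2.1
        · -- s² ∉ S : use the pair (s⁻¹, s)
          have hs3T : s * s * s ∈ S \ {s, s⁻¹} → False := by
            intro h3T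
            obtain ⟨hd, hsub⟩ := c.commonH h3T h2S p2
            have hcard := hC2 1 (s * s) hd
            rw [hc2v] at hcard
            have d2 : s ≠ s * s * s := by
              intro h
              apply p2
              have h' := congrArg (fun z => s⁻¹ * z) h
              rw [show s⁻¹ * s = (1 : G) from by group,
                show s⁻¹ * (s * s * s) = s * s from by group] at h'
              exact h'.symm
            have d3 : s⁻¹ ≠ s * s * s := by
              intro h
              apply p4
              have h' := congrArg (fun z => s * z) h
              rw [show s * s⁻¹ = (1 : G) from by group,
                show s * (s * s * s) = s * s * s * s from by group] at h'
              exact h'.symm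
            have hfin : ((cayleyGraph G S).neighborSet 1 ∩
                (cayleyGraph G S).neighborSet (s * s)).Finite := by
              rcases Set.finite_or_infinite ((cayleyGraph G S).neighborSet 1 ∩
                (cayleyGraph G S).neighborSet (s * s)) with hf | hf
              · exact hf
              · rw [hf.ncard] at hcard; omega
            have hle := Set.ncard_le_ncard hsub hfin
            rw [ncard3 hd5 d2 d3, hcard] at hle
            omega
          have hcardG := hC2 s⁻¹ s (c.commonG_dist h2S p2)
          rw [hc2v] at hcardG
          have hex : ∃ w ∈ (cayleyGraph G S).neighborSet s⁻¹ ∩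
              (cayleyGraph G S).neighborSet s, w ≠ 1 := by
            by_contra hcon
            push_neg at hcon
            have hsub1 : ((cayleyGraph G S).neighborSet s⁻¹ ∩
                (cayleyGraph G S).neighborSet s) ⊆ {1} := fun w hw => hcon w hw
            have hle := Set.ncard_le_ncard hsub1 (Set.finite_singleton 1)
            rw [hcardG, Set.ncard_singleton] at hle
            omega
          obtain ⟨w, hwmem, hwne⟩ := hex
          rcases c.commonG_elts h2S p2 p4 w hwmem with h | ⟨y, hy, hy2, hyne⟩ | h3T
          · exact hwne h
          · exact lemX y hy hy2 hyne
          · exact hs3T h3T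
end

section
/- Let G be a generalized dicyclic group generated by A and t, let S be an inverse-closed subset of G∖{1} with ⟨S⟩ = G, let s ∈ S ∩ A be such that H = ⟨S∖{s,s⁻¹}⟩ ≠ G, and suppose [G:H] = 3 and s has order 3. Then the Cayley graph Cay(G,S) is isomorphic to the Cartesian product K₃ □ Cay(H, S∖{s,s⁻¹}). -/
open SimpleGraph Pointwise

/-- Case B of Claim 2.4: if `[G:H] = 3` and `o(s) = 3`, then
`Cay(G,S) ≅ K₃ □ Cay(H, S \ {s, s⁻¹})`. -/
theorem caseB_cartesian_product
    {G : Type*} [Group G] (A : Subgroup G) (t : G) (hG : IsGenDicyclic A t)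
    (S : Set G) (hS1 : (1 : G) ∉ S) (hSinv : ∀ x ∈ S, x⁻¹ ∈ S)
    (hSgen : Subgroup.closure S = ⊤)
    (s : G) (hsS : s ∈ S) (hsA : s ∈ A)
    (H : Subgroup G) (hHdef : H = Subgroup.closure (S \ {s, s⁻¹})) (hH : H ≠ ⊤)
    (hidx : H.index = 3) (hord : orderOf s = 3) :
    Nonempty (cayleyGraph G S ≃g
      ((⊤ : SimpleGraph (Fin 3)) □ cayleyGraph H {h : H | (h : G) ∈ S \ {s, s⁻¹}})) := by
  classical
  -- basic power facts
  have hs3 : s ^ 3 = 1 := by rw [← hord]; exact pow_orderOf_eq_one s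
  have hs2 : s ^ 2 = s⁻¹ := by
    have h1 : s ^ 2 * s = 1 := by rw [← pow_succ]; exact hs3
    exact eq_inv_of_mul_eq_one_left h1
  have hss : s * s = s⁻¹ := by rw [← pow_two]; exact hs2
  have hinvinv : s⁻¹ * s⁻¹ = s := by
    rw [← mul_inv_rev, hss, inv_inv]
  -- S \ {s, s⁻¹} ⊆ H
  have hS'sub : S \ {s, s⁻¹} ⊆ (H : Set G) := hHdef ▸ Subgroup.subset_closure
  have hsnotH : s ∉ H := by
    intro hsH
    apply hH
    have hsub : S ⊆ (H : Set G) := by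
      intro x hx
      by_cases hx1 : x = s
      · subst hx1; exact hsH
      by_cases hx2 : x = s⁻¹
      · subst hx2; exact inv_mem hsH
      · exact hS'sub ⟨hx, by simp [hx1, hx2]⟩
    have := (Subgroup.closure_le H).mpr hsub
    rw [hSgen] at this
    exact top_le_iff.mp this
  have hsinvnotH : s⁻¹ ∉ H := fun h => hsnotH (by simpa using inv_mem h)
  -- every element conjugates s into {s, s⁻¹}
  have hconj : ∀ g : G, g⁻¹ * s * g = s ∨ g⁻¹ * s * g = s⁻¹ := by
    let K : Subgroup G :=
      { carrier := {g | g⁻¹ * s * g = s ∨ g⁻¹ * s * g = s⁻¹}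
        one_mem' := Or.inl (by group)
        mul_mem' := by
          rintro a b ha hb
          have key : (a * b)⁻¹ * s * (a * b) = b⁻¹ * (a⁻¹ * s * a) * b := by group
          rcases ha with ha | ha
          · rw [Set.mem_setOf_eq, key, ha]; exact hb
          · rw [Set.mem_setOf_eq, key, ha]
            rcases hb with hb | hb
            · right; rw [show b⁻¹ * s⁻¹ * b = (b⁻¹ * s * b)⁻¹ by group, hb]
            · left; rw [show b⁻¹ * s⁻¹ * b = (b⁻¹ * s * b)⁻¹ by group, hb, inv_inv]
        inv_mem' := by
          rintro a (ha | ha)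
          · have h2 : a * (a⁻¹ * s * a) * a⁻¹ = s := by group
            rw [ha] at h2
            left; rw [inv_inv]; exact h2
          · have h2 : a * (a⁻¹ * s * a) * a⁻¹ = s := by group
            rw [ha] at h2
            right; rw [inv_inv]
            have h3 := congrArg Inv.inv h2
            rw [← h3]; group }
    have hle : Subgroup.closure ((A : Set G) ∪ {t}) ≤ K := by
      apply Subgroup.closure_le K |>.mpr
      rintro x (hx | hx)
      · left
        have hc : s * x = x * s := hG.comm s hsA x hx
        rw [mul_assoc, hc, ← mul_assoc, inv_mul_cancel, one_mul]
      · rw [Set.mem_singleton_iff] at hx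
        subst hx
        right; exact hG.conj s hsA
    intro g
    exact hle (by rw [hG.gen]; trivial)
  have hconjset : ∀ g u : G, (u = s ∨ u = s⁻¹) →
      (g⁻¹ * u * g = s ∨ g⁻¹ * u * g = s⁻¹) := by
    rintro g u (rfl | rfl)
    · exact hconj g
    · rcases hconj g with h | h
      · right; rw [show g⁻¹ * s⁻¹ * g = (g⁻¹ * s * g)⁻¹ by group, h]
      · left; rw [show g⁻¹ * s⁻¹ * g = (g⁻¹ * s * g)⁻¹ by group, h, inv_inv]
  -- powers of s and cosets
  have hpow' : ∀ a b : ℕ, a < 3 → b < 3 → a ≠ b →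
      (s ^ a)⁻¹ * s ^ b = s ∨ (s ^ a)⁻¹ * s ^ b = s⁻¹ := by
    intro a b ha hb hne
    interval_cases a <;> interval_cases b <;> first
      | exact absurd rfl hne
      | (left; rw [pow_zero, pow_one, inv_one, one_mul])
      | (right; rw [pow_zero, inv_one, one_mul, hs2])
      | (right; rw [pow_zero, pow_one, mul_one])
      | (left; rw [pow_one, pow_two, ← mul_assoc, inv_mul_cancel, one_mul])
      | (left; rw [pow_zero, mul_one, hs2, inv_inv])
      | (right; rw [pow_one, hs2, inv_inv, hss])
  have hpow : ∀ i j : Fin 3, i ≠ j →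
      (s ^ (i : ℕ))⁻¹ * s ^ (j : ℕ) = s ∨ (s ^ (i : ℕ))⁻¹ * s ^ (j : ℕ) = s⁻¹ := by
    intro i j hne
    exact hpow' i j i.isLt j.isLt (fun hv => hne (Fin.ext hv))
  -- the quotient map on powers of s is bijective
  set f : Fin 3 → G ⧸ H := fun i => ((s ^ (i : ℕ) : G) : G ⧸ H) with hf
  have hfinj : Function.Injective f := by
    intro i j hij
    by_contra hne
    have hmem : (s ^ (i : ℕ))⁻¹ * s ^ (j : ℕ) ∈ H := QuotientGroup.eq.mp hij
    rcases hpow i j hne with h | h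
    · rw [h] at hmem; exact hsnotH hmem
    · rw [h] at hmem; exact hsinvnotH hmem
  have hfsurj : Function.Surjective f := by
    have hfin : Finite (G ⧸ H) := Nat.finite_of_card_ne_zero
      (by rw [← Subgroup.index_eq_card, hidx]; norm_num)
    have hcard : Nat.card (Fin 3) = Nat.card (G ⧸ H) := by
      rw [Nat.card_eq_fintype_card, Fintype.card_fin, ← Subgroup.index_eq_card, hidx]
    exact ((Nat.bijective_iff_injective_and_card f).mpr ⟨hfinj, hcard⟩).2
  -- the equivalence Fin 3 × H ≃ G
  set m : Fin 3 × H → G := fun p => s ^ ((p.1 : Fin 3) : ℕ) * (p.2 : G) with hm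
  have hminj : Function.Injective m := by
    rintro ⟨i, h⟩ ⟨j, h'⟩ hmeq
    simp only [hm] at hmeq
    have hq : f i = f j := by
      calc f i = ((s ^ (i : ℕ) * (h : G) : G) : G ⧸ H) :=
            (QuotientGroup.mk_mul_of_mem _ h.2).symm
        _ = ((s ^ (j : ℕ) * (h' : G) : G) : G ⧸ H) := by rw [hmeq]
        _ = f j := QuotientGroup.mk_mul_of_mem _ h'.2
    have hij := hfinj hq
    subst hij
    have : (h : G) = (h' : G) := mul_left_cancel hmeq
    exact Prod.ext rfl (Subtype.ext this)
  have hmsurj : Function.Surjective m := by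
    intro g
    obtain ⟨i, hi⟩ := hfsurj ((g : G) : G ⧸ H)
    have hmem : (s ^ (i : ℕ))⁻¹ * g ∈ H := QuotientGroup.eq.mp hi
    exact ⟨(i, ⟨(s ^ (i : ℕ))⁻¹ * g, hmem⟩), by simp [hm, mul_inv_cancel_left]⟩
  set e : Fin 3 × H ≃ G := Equiv.ofBijective m ⟨hminj, hmsurj⟩ with he
  -- simplify S-membership disjunctions
  have hSiff : ∀ x y : G, (y⁻¹ * x ∈ S ∨ x⁻¹ * y ∈ S) ↔ x⁻¹ * y ∈ S := by
    intro x y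
    constructor
    · rintro (h | h)
      · simpa using hSinv _ h
      · exact h
    · exact Or.inr
  have hS'inv : ∀ x ∈ S \ ({s, s⁻¹} : Set G), x⁻¹ ∈ S \ ({s, s⁻¹} : Set G) := by
    rintro x ⟨hx1, hx2⟩
    refine ⟨hSinv x hx1, ?_⟩
    simp only [Set.mem_insert_iff, Set.mem_singleton_iff] at hx2 ⊢
    push_neg at hx2 ⊢
    constructor
    · intro hxs; exact hx2.2 (by rw [← hxs, inv_inv])
    · intro hxs; exact hx2.1 (by rw [inv_inj] at hxs; exact hxs)
  have hS'iff : ∀ x y : G, (y⁻¹ * x ∈ S \ ({s, s⁻¹} : Set G) ∨ x⁻¹ * y ∈ S \ ({s, s⁻¹} : Set G))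
      ↔ x⁻¹ * y ∈ S \ ({s, s⁻¹} : Set G) := by
    intro x y
    constructor
    · rintro (h | h)
      · simpa using hS'inv _ h
      · exact h
    · exact Or.inr
  -- membership in S for elements of H
  have hHS : ∀ x : G, x ∈ H → (x ∈ S ↔ x ∈ S \ ({s, s⁻¹} : Set G)) := by
    intro x hxH
    constructor
    · intro hxS
      refine ⟨hxS, ?_⟩
      simp only [Set.mem_insert_iff, Set.mem_singleton_iff]
      push_neg
      exact ⟨fun h => hsnotH (h ▸ hxH), fun h => hsinvnotH (h ▸ hxH)⟩
    · exact fun h => h.1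
  -- key cancellation lemma
  have hkey : ∀ v w : G, (v = s ∨ v = s⁻¹) → w ∈ H → v * w ∈ S → w = 1 := by
    intro v w hv hwH hvwS
    have hvwnotH : v * w ∉ H := by
      intro hmem
      have hvH : v ∈ H := by
        have := mul_mem hmem (inv_mem hwH)
        simpa [mul_assoc] using this
      rcases hv with hv | hv
      · exact hsnotH (hv ▸ hvH)
      · exact hsinvnotH (hv ▸ hvH)
    have hvw : v * w = s ∨ v * w = s⁻¹ := by
      by_contra hvw
      push_neg at hvw
      have : v * w ∈ S \ ({s, s⁻¹} : Set G) := by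
        refine ⟨hvwS, ?_⟩
        simp only [Set.mem_insert_iff, Set.mem_singleton_iff]
        push_neg
        exact hvw
      exact hvwnotH (hS'sub this)
    rcases hv with hv | hv <;> rw [hv] at hvw <;> rcases hvw with hvw | hvw
    · exact mul_left_cancel (a := s) (by rw [mul_one]; exact hvw)
    · exfalso
      apply hsnotH
      have hws : w = s := by
        rw [show w = s⁻¹ * (s * w) by group, hvw, hinvinv]
      exact hws ▸ hwH
    · exfalso
      apply hsinvnotH
      have hws : w = s⁻¹ := by
        rw [show w = s * (s⁻¹ * w) by group, hvw, hss]
      exact hws ▸ hwH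
    · exact mul_left_cancel (a := s⁻¹) (by rw [mul_one]; exact hvw)
  -- the key adjacency correspondence
  have hadj : ∀ a b : Fin 3 × H,
      (cayleyGraph G S).Adj (m a) (m b) ↔
      ((⊤ : SimpleGraph (Fin 3)) □ cayleyGraph H {h : H | (h : G) ∈ S \ {s, s⁻¹}}).Adj a b := by
    rintro ⟨i, h⟩ ⟨j, h'⟩
    rw [SimpleGraph.boxProd_adj]
    show ((s ^ (i : ℕ) * (h : G) ≠ s ^ (j : ℕ) * (h' : G)) ∧ _) ↔ _
    rw [and_congr_right_iff.mpr (fun _ => hSiff (s ^ (i : ℕ) * (h : G)) (s ^ (j : ℕ) * (h' : G)))]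
    by_cases hij : i = j
    · subst hij
      simp only [SimpleGraph.top_adj, ne_eq, not_true_eq_false, false_and, false_or,
        and_true]
      constructor
      · rintro ⟨hne, hmemS⟩
        have hexpr : (s ^ (i : ℕ) * (h : G))⁻¹ * (s ^ (i : ℕ) * (h' : G))
            = (h : G)⁻¹ * (h' : G) := by group
        rw [hexpr] at hmemS
        have hmemS' : (h : G)⁻¹ * (h' : G) ∈ S \ ({s, s⁻¹} : Set G) :=
          (hHS _ (mul_mem (inv_mem h.2) h'.2)).mp hmemS
        refine ⟨fun hhe => hne (by rw [hhe]), ?_⟩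
        right
        show ((h⁻¹ * h' : H) : G) ∈ S \ ({s, s⁻¹} : Set G)
        push_cast
        exact hmemS'
      · rintro ⟨hne, hS''⟩
        have hmemS' : (h : G)⁻¹ * (h' : G) ∈ S \ ({s, s⁻¹} : Set G) := by
          have := (hS'iff ((h : G)) ((h' : G))).mp ?_
          · exact this
          · rcases hS'' with hc | hc
            · left; exact_mod_cast hc
            · right; exact_mod_cast hc
        constructor
        · intro heq
          have : (h : G) = (h' : G) := mul_left_cancel heq
          exact hne (Subtype.ext this)
        · have hexpr : (s ^ (i : ℕ) * (h : G))⁻¹ * (s ^ (i : ℕ) * (h' : G))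
              = (h : G)⁻¹ * (h' : G) := by group
          rw [hexpr]
          exact hmemS'.1
    · simp only [SimpleGraph.top_adj, ne_eq, hij, not_false_eq_true, true_and, and_false,
        or_false]
      have hv : (h : G)⁻¹ * ((s ^ (i : ℕ))⁻¹ * s ^ (j : ℕ)) * (h : G) = s ∨
          (h : G)⁻¹ * ((s ^ (i : ℕ))⁻¹ * s ^ (j : ℕ)) * (h : G) = s⁻¹ :=
        hconjset (h : G) _ (hpow i j hij)
      have hexpr : (s ^ (i : ℕ) * (h : G))⁻¹ * (s ^ (j : ℕ) * (h' : G))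
          = ((h : G)⁻¹ * ((s ^ (i : ℕ))⁻¹ * s ^ (j : ℕ)) * (h : G))
            * ((h : G)⁻¹ * (h' : G)) := by group
      have hwH : (h : G)⁻¹ * (h' : G) ∈ H := mul_mem (inv_mem h.2) h'.2
      constructor
      · rintro ⟨hne, hmemS⟩
        rw [hexpr] at hmemS
        have hw1 : (h : G)⁻¹ * (h' : G) = 1 := hkey _ _ hv hwH hmemS
        have : (h : G) = (h' : G) := by
          calc (h : G) = (h : G) * ((h : G)⁻¹ * (h' : G)) := by rw [hw1, mul_one]
            _ = (h' : G) := by group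
        exact Subtype.ext this
      · rintro rfl
        constructor
        · intro heq
          exact hij (congrArg Prod.fst (hminj (a₁ := (i, h)) (a₂ := (j, h)) heq))
        · rw [hexpr, inv_mul_cancel, mul_one]
          rcases hv with hv | hv <;> rw [hv]
          · exact hsS
          · exact hSinv s hsS
  exact ⟨(RelIso.mk e (fun {a b} => hadj a b) :
    ((⊤ : SimpleGraph (Fin 3)) □
      cayleyGraph H {h : H | (h : G) ∈ S \ {s, s⁻¹}}) ≃g cayleyGraph G S).symm⟩
end
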